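/- arXiv:2202.01293 — 10 statements merged into one kernel-verified Lean document; each statement's English description precedes it below -/
import Mathlib

section
/- For every finite nonempty set P of points in the open interval (0,1), there exist a finite set C ⊆ (0,1) with C ∩ P = ∅, a continuous function f : ℝ → ℝ such that f is distance-preserving on every subset of [0,1] whose convex hull contains no point of C, and a real number c, such that {x ∈ [0,1] : f x = c} = P. (1D fold & cut is always solvable: folding at the midpoint between each pair of consecutive cut points aligns exactly the cut points.) -/
/-- `f` preserves distances between points of `S`. -/
def DistPreservingOn (f : ℝ → ℝ) (S : Set ℝ) : Prop :=
  ∀ x ∈ S, ∀ y ∈ S, |f x - f y| = |x - y|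

lemma fold_aux (Q : Finset ℝ) : ∀ (hne : Q.Nonempty), ↑Q ⊆ Set.Ioo (0:ℝ) 1 →
    ∃ (C : Set ℝ) (f : ℝ → ℝ) (c s : ℝ),
      (s = 1 ∨ s = -1) ∧ C.Finite ∧ C ⊆ Set.Ioo (0:ℝ) (Q.max' hne) ∧
      C ∩ ↑Q = ∅ ∧
      Continuous f ∧
      (∀ S : Set ℝ, S ⊆ Set.Icc (0:ℝ) 1 → (convexHull ℝ S) ∩ C = ∅ →
        DistPreservingOn f S) ∧
      f ⁻¹' {c} = ↑Q ∧
      (∀ x, Q.max' hne ≤ x → f x = c + s * (x - Q.max' hne)) := by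
  induction Q using Finset.strongInduction with
  | _ Q ih =>
    intro hne hsub
    set pn := Q.max' hne with hpn
    by_cases hQ' : (Q.erase pn).Nonempty
    · obtain ⟨C', f', c', s', hs', hC'fin, hC'sub, hC'Q, hcont', hdp', hfib', haff'⟩ :=
        ih (Q.erase pn) (Finset.erase_ssubset (Q.max'_mem hne)) hQ'
          (fun x hx => hsub (Finset.mem_of_mem_erase hx))
      set p' := (Q.erase pn).max' hQ' with hp'
      have hp'mem : p' ∈ Q.erase pn := Finset.max'_mem _ _
      have hp'lt : p' < pn :=
        lt_of_le_of_ne (Q.le_max' _ (Finset.mem_of_mem_erase hp'mem))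
          (Finset.ne_of_mem_erase hp'mem)
      have hp'pos : 0 < p' := (hsub (Finset.mem_of_mem_erase hp'mem)).1
      set m := (p' + pn) / 2 with hm
      have hp'm : p' < m := by rw [hm]; linarith
      have hmpn : m < pn := by rw [hm]; linarith
      have hmpos : 0 < m := by linarith
      have hle_p' : ∀ q ∈ Q.erase pn, q ≤ p' := fun q hq => Finset.le_max' _ q hq
      have hs'ne : s' ≠ 0 := by rcases hs' with h | h <;> rw [h] <;> norm_num
      have hf'm : f' m = c' + s' * (m - p') := haff' m hp'm.le
      have hpn2 : pn = 2 * m - p' := by rw [hm]; ring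
      refine ⟨C' ∪ {m}, fun x => if x ≤ m then f' x else f' m - s' * (x - m), c', -s',
        ?_, hC'fin.union (Set.finite_singleton m), ?_, ?_, ?_, ?_, ?_, ?_⟩
      · rcases hs' with h | h
        · right; rw [h]
        · left; rw [h]; ring
      · intro x hx
        rcases hx with hx | hx
        · exact ⟨(hC'sub hx).1, lt_trans (hC'sub hx).2 hp'lt⟩
        · rw [Set.mem_singleton_iff] at hx; subst hx; exact ⟨hmpos, hmpn⟩
      · ext x
        simp only [Set.mem_inter_iff, Set.mem_union, Set.mem_singleton_iff, Set.mem_empty_iff_false,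
          iff_false, not_and, Finset.mem_coe]
        rintro (hx | hx) hxQ
        · have hxp' : x < p' := (hC'sub hx).2
          have : x ∈ Q.erase pn := Finset.mem_erase.2 ⟨by intro h; rw [h] at hxp'; linarith, hxQ⟩
          exact Set.eq_empty_iff_forall_notMem.mp hC'Q x ⟨hx, Finset.mem_coe.2 this⟩
        · subst hx
          have : m ∈ Q.erase pn := Finset.mem_erase.2 ⟨ne_of_lt hmpn, hxQ⟩
          have := hle_p' m this
          linarith
      · apply Continuous.if_le (hcont') (by fun_prop) continuous_id continuous_const
        intro x hx
        simp only [id] at hx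
        rw [hx]; ring
      · intro S hS hhull
        have hmnot : m ∉ convexHull ℝ S := by
          intro hmem
          exact Set.eq_empty_iff_forall_notMem.mp hhull m ⟨hmem, Or.inr rfl⟩
        have hC'empty : convexHull ℝ S ∩ C' = ∅ := by
          apply Set.eq_empty_of_subset_empty
          rw [← hhull]
          exact Set.inter_subset_inter_right _ Set.subset_union_left
        by_cases hall : ∀ x ∈ S, x ≤ m
        · intro x hx y hy
          simp only [if_pos (hall x hx), if_pos (hall y hy)]
          exact hdp' S hS hC'empty x hx y hy
        · push_neg at hall
          obtain ⟨b, hbS, hbm⟩ := hall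
          have hgt : ∀ x ∈ S, m < x := by
            intro a haS
            by_contra hna
            push_neg at hna
            have ham : a < m := lt_of_le_of_ne hna (by
              intro h; subst h; exact hmnot (subset_convexHull ℝ S haS))
            have hseg : segment ℝ a b ⊆ convexHull ℝ S :=
              (convex_convexHull ℝ S).segment_subset (subset_convexHull ℝ S haS)
                (subset_convexHull ℝ S hbS)
            have : m ∈ segment ℝ a b := by
              rw [segment_eq_Icc (by linarith : a ≤ b)]
              exact ⟨ham.le, hbm.le⟩
            exact hmnot (hseg this)
          intro x hx y hy
          simp only [if_neg (not_le.mpr (hgt x hx)), if_neg (not_le.mpr (hgt y hy))]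
          have : f' m - s' * (x - m) - (f' m - s' * (y - m)) = s' * (y - x) := by ring
          rw [this, abs_mul]
          rcases hs' with h | h <;> rw [h] <;> simp [abs_sub_comm]
      · ext x
        simp only [Set.mem_preimage, Set.mem_singleton_iff, Finset.mem_coe]
        by_cases hxm : x ≤ m
        · rw [if_pos hxm]
          constructor
          · intro h
            have : x ∈ (↑(Q.erase pn) : Set ℝ) := by rw [← hfib']; exact h
            exact Finset.mem_of_mem_erase (Finset.mem_coe.1 this)
          · intro h
            have hxne : x ≠ pn := by intro he; subst he; linarith
            have : x ∈ (↑(Q.erase pn) : Set ℝ) := Finset.mem_coe.2 (Finset.mem_erase.2 ⟨hxne, h⟩)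
            rw [← hfib'] at this
            exact this
        · push_neg at hxm
          rw [if_neg (not_le.mpr hxm)]
          constructor
          · intro h
            rw [hf'm] at h
            have hx : x = pn := by
              have h2 : s' * (pn - x) = 0 := by rw [hpn2]; linear_combination h
              rcases mul_eq_zero.mp h2 with h3 | h3
              · exact absurd h3 hs'ne
              · linarith
            rw [hx]
            exact Q.max'_mem hne
          · intro h
            have hx : x = pn := by
              by_contra hne'
              have : x ∈ Q.erase pn := Finset.mem_erase.2 ⟨hne', h⟩
              have := hle_p' x this
              linarith
            subst hx
            rw [hf'm, hpn2]
            ring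
      · intro x hx
        have hxm : ¬ x ≤ m := by push_neg; linarith
        simp only [if_neg hxm]
        rw [hf'm, hpn2]
        ring
    · have hQsing : Q = {pn} := by
        rw [Finset.not_nonempty_iff_eq_empty] at hQ'
        rcases (Finset.erase_eq_empty_iff Q pn).mp hQ' with h | h
        · exact absurd h (Finset.nonempty_iff_ne_empty.mp hne)
        · exact h
      have hpn01 : pn ∈ Set.Ioo (0:ℝ) 1 := hsub (Q.max'_mem hne)
      refine ⟨∅, id, pn, 1, Or.inl rfl, Set.finite_empty, by simp, by simp, continuous_id,
        ?_, ?_, ?_⟩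
      · intro S _ _ x _ y _
        rfl
      · ext x
        simp [hQsing, eq_comm]
      · intro x _
        simp [id]

/-- 1D fold & cut is always solvable: for every finite nonempty set `P` of cut
points in `(0,1)` there is a finite crease set `C` disjoint from `P`, a flat
folding `f` (continuous, distance-preserving on every subset of `[0,1]` whose
convex hull avoids the creases), and a value `c` whose fiber in `[0,1]` is
exactly `P`. -/
theorem one_dim_fold_and_cut_solvable
    (P : Set ℝ) (hPfin : P.Finite) (hPne : P.Nonempty) (hPsub : P ⊆ Set.Ioo (0:ℝ) 1) :
    ∃ (C : Set ℝ) (f : ℝ → ℝ) (c : ℝ),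
      C.Finite ∧ C ⊆ Set.Ioo (0:ℝ) 1 ∧ C ∩ P = ∅ ∧
      Continuous f ∧
      (∀ S : Set ℝ, S ⊆ Set.Icc (0:ℝ) 1 → (convexHull ℝ S) ∩ C = ∅ →
        DistPreservingOn f S) ∧
      {x ∈ Set.Icc (0:ℝ) 1 | f x = c} = P := by
  set Q := hPfin.toFinset with hQ
  have hcoe : (↑Q : Set ℝ) = P := hPfin.coe_toFinset
  have hne : Q.Nonempty := by
    rw [← Finset.coe_nonempty, hcoe]; exact hPne
  have hsub : (↑Q : Set ℝ) ⊆ Set.Ioo (0:ℝ) 1 := by rw [hcoe]; exact hPsub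
  obtain ⟨C, f, c, s, _, hCfin, hCsub, hCQ, hcont, hdp, hfib, _⟩ := fold_aux Q hne hsub
  have hmax : Q.max' hne ∈ Set.Ioo (0:ℝ) 1 := hsub (Q.max'_mem hne)
  refine ⟨C, f, c, hCfin, ?_, by rw [← hcoe]; exact hCQ, hcont, hdp, ?_⟩
  · exact hCsub.trans (Set.Ioo_subset_Ioo le_rfl hmax.2.le)
  · ext x
    simp only [Set.mem_setOf_eq, Set.mem_Icc]
    constructor
    · rintro ⟨_, hfx⟩
      have : x ∈ f ⁻¹' {c} := hfx
      rw [hfib] at this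
      rw [← hcoe]; exact this
    · intro hx
      have hx' : x ∈ (↑Q : Set ℝ) := by rw [hcoe]; exact hx
      have h01 := hPsub hx
      refine ⟨⟨h01.1.le, h01.2.le⟩, ?_⟩
      have : x ∈ f ⁻¹' {c} := by rw [hfib]; exact hx'
      exact this
end

section
/- Let n ≥ 2, let p : Fin n → ℝ be strictly monotone increasing with each p i ∈ [0,1], let s : Fin n → ℤ with each s i ∈ {−1, 1}, let f : ℝ → ℝ be continuous, and let y ∈ ℝ satisfy {x ∈ [0,1] : f x = y} = {p i : i ∈ Fin n}. Suppose for each i there exists δ > 0 such that f is strictly monotone on (p i − δ, p i + δ), strictly increasing if s i = 1 and strictly decreasing if s i = −1. Then the signs alternate: s (i+1) = − s i for every i < n − 1. -/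
/-- Necessity direction for signed 1D fold & cut: if a continuous folded map
`f` aligns exactly the cut points `p 0 < p 1 < ⋯ < p (n-1)` in `[0,1]` at a
value `y`, and `f` is locally strictly increasing at cut points with sign `+1`
and locally strictly decreasing at cut points with sign `−1`, then the signs
must alternate. -/
theorem signed_fold_and_cut_signs_alternate
    (n : ℕ) (hn : 2 ≤ n)
    (p : Fin n → ℝ) (hp : StrictMono p) (hp01 : ∀ i, p i ∈ Set.Icc (0:ℝ) 1)
    (s : Fin n → ℤ) (hs : ∀ i, s i = -1 ∨ s i = 1)
    (f : ℝ → ℝ) (hf : Continuous f) (y : ℝ)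
    (hfib : {x ∈ Set.Icc (0:ℝ) 1 | f x = y} = Set.range p)
    (hloc : ∀ i, ∃ δ > (0:ℝ),
      (s i = 1 → StrictMonoOn f (Set.Ioo (p i - δ) (p i + δ))) ∧
      (s i = -1 → StrictAntiOn f (Set.Ioo (p i - δ) (p i + δ)))) :
    ∀ i : Fin n, ∀ h : i.val + 1 < n, s ⟨i.val + 1, h⟩ = - s i := by
  intro i h
  set j : Fin n := ⟨i.val + 1, h⟩ with hj
  set a := p i with ha
  set b := p j with hb
  have hij : i < j := by simp [hj, Fin.lt_def]
  have hab : a < b := hp hij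
  have hfa : f a = y := by
    have : a ∈ {x ∈ Set.Icc (0:ℝ) 1 | f x = y} := hfib ▸ ⟨i, rfl⟩
    exact this.2
  have hfb : f b = y := by
    have : b ∈ {x ∈ Set.Icc (0:ℝ) 1 | f x = y} := hfib ▸ ⟨j, rfl⟩
    exact this.2
  have keyA : ∀ z ∈ Set.Ioo a b, f z ≠ y := by
    intro z hz hz'
    have hz01 : z ∈ Set.Icc (0:ℝ) 1 :=
      ⟨le_trans (hp01 i).1 hz.1.le, le_trans hz.2.le (hp01 j).2⟩
    have hmem : z ∈ Set.range p := hfib ▸ (⟨hz01, hz'⟩ : z ∈ {x ∈ Set.Icc (0:ℝ) 1 | f x = y})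
    obtain ⟨k, hk⟩ := hmem
    have h1 : i < k := hp.lt_iff_lt.mp (by rw [hk]; exact hz.1)
    have h2 : k < j := hp.lt_iff_lt.mp (by rw [hk]; exact hz.2)
    have h1' : i.val < k.val := h1
    have h2' : k.val < i.val + 1 := h2
    omega
  have keyC : ∀ u v : ℝ, u ∈ Set.Ioo a b → v ∈ Set.Ioo a b → y < f u → f v < y → False := by
    intro u v hu hv h1 h2
    rcases le_total u v with huv | huv
    · obtain ⟨z, hz, hz'⟩ := intermediate_value_Icc' huv hf.continuousOn ⟨h2.le, h1.le⟩
      exact keyA z ⟨lt_of_lt_of_le hu.1 hz.1, lt_of_le_of_lt hz.2 hv.2⟩ hz'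
    · obtain ⟨z, hz, hz'⟩ := intermediate_value_Icc huv hf.continuousOn ⟨h2.le, h1.le⟩
      exact keyA z ⟨lt_of_lt_of_le hv.1 hz.1, lt_of_le_of_lt hz.2 hu.2⟩ hz'
  obtain ⟨δ1, hδ1, hmono1, hanti1⟩ := hloc i
  obtain ⟨δ2, hδ2, hmono2, hanti2⟩ := hloc j
  set x1 := a + min δ1 (b - a) / 2 with hx1def
  set x2 := b - min δ2 (b - a) / 2 with hx2def
  have hm1 : 0 < min δ1 (b - a) := lt_min hδ1 (by linarith)
  have hm2 : 0 < min δ2 (b - a) := lt_min hδ2 (by linarith)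
  have hm1δ : min δ1 (b - a) ≤ δ1 := min_le_left _ _
  have hm1b : min δ1 (b - a) ≤ b - a := min_le_right _ _
  have hm2δ : min δ2 (b - a) ≤ δ2 := min_le_left _ _
  have hm2b : min δ2 (b - a) ≤ b - a := min_le_right _ _
  have hx1ab : x1 ∈ Set.Ioo a b := by
    rw [Set.mem_Ioo, hx1def]; constructor <;> linarith
  have hx2ab : x2 ∈ Set.Ioo a b := by
    rw [Set.mem_Ioo, hx2def]; constructor <;> linarith
  have hx1δ : x1 ∈ Set.Ioo (a - δ1) (a + δ1) := by
    rw [Set.mem_Ioo, hx1def]; constructor <;> linarith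
  have haδ : a ∈ Set.Ioo (a - δ1) (a + δ1) := ⟨by linarith, by linarith⟩
  have hx2δ : x2 ∈ Set.Ioo (b - δ2) (b + δ2) := by
    rw [Set.mem_Ioo, hx2def]; constructor <;> linarith
  have hbδ : b ∈ Set.Ioo (b - δ2) (b + δ2) := ⟨by linarith, by linarith⟩
  have hax1 : a < x1 := hx1ab.1
  have hx2b : x2 < b := hx2ab.2
  rcases hs i with hsi | hsi <;> rcases hs j with hsj | hsj
  · -- both -1 : contradiction
    exfalso
    have h1 : f x1 < f a := (hanti1 hsi) haδ hx1δ hax1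
    have h2 : f b < f x2 := (hanti2 hsj) hx2δ hbδ hx2b
    exact keyC x2 x1 hx2ab hx1ab (hfb ▸ h2) (hfa ▸ h1)
  · simp [hsi, hsj]
  · simp [hsi, hsj]
  · -- both 1 : contradiction
    exfalso
    have h1 : f a < f x1 := (hmono1 hsi) haδ hx1δ hax1
    have h2 : f x2 < f b := (hmono2 hsj) hx2δ hbδ hx2b
    exact keyC x1 x2 hx1ab hx2ab (hfa ▸ h1) (hfb ▸ h2)
end

section
/- Let n ≥ 1, let p : Fin n → ℝ be strictly monotone increasing with each p i ∈ (0,1), and let s : Fin n → ℤ with each s i ∈ {−1, 1} and s (i+1) = − s i for every i < n − 1. Then there exist a finite set C ⊆ (0,1) with C ∩ {p i : i} = ∅, a continuous f : ℝ → ℝ that is distance-preserving on every subset of [0,1] whose convex hull contains no point of C, and y ∈ ℝ, such that {x ∈ [0,1] : f x = y} = {p i : i}, and for each i there exists δ > 0 such that f is strictly increasing on (p i − δ, p i + δ) if s i = 1 and strictly decreasing there if s i = −1. -/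
/-- Sufficiency direction for signed 1D fold & cut: if the signs of the cut
points `p 0 < ⋯ < p (n-1)` in `(0,1)` alternate, then there is a finite crease
set `C` disjoint from the cut points, a flat folding `f` (continuous,
distance-preserving on every subset of `[0,1]` whose convex hull avoids the
creases), and a value `y` whose fiber in `[0,1]` is exactly the set of cut
points, with `f` locally strictly increasing at positive cut points and locally
strictly decreasing at negative ones. -/
theorem signed_fold_and_cut_solvable_of_alternating
    (n : ℕ) (hn : 1 ≤ n)
    (p : Fin n → ℝ) (hp : StrictMono p) (hp01 : ∀ i, p i ∈ Set.Ioo (0:ℝ) 1)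
    (s : Fin n → ℤ) (hs : ∀ i, s i = -1 ∨ s i = 1)
    (halt : ∀ i : Fin n, ∀ h : i.val + 1 < n, s ⟨i.val + 1, h⟩ = - s i) :
    ∃ (C : Set ℝ) (f : ℝ → ℝ) (y : ℝ),
      C.Finite ∧ C ⊆ Set.Ioo (0:ℝ) 1 ∧ C ∩ Set.range p = ∅ ∧
      Continuous f ∧
      (∀ S : Set ℝ, S ⊆ Set.Icc (0:ℝ) 1 → (convexHull ℝ S) ∩ C = ∅ →
        DistPreservingOn f S) ∧
      {x ∈ Set.Icc (0:ℝ) 1 | f x = y} = Set.range p ∧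
      (∀ i, ∃ δ > (0:ℝ),
        (s i = 1 → StrictMonoOn f (Set.Ioo (p i - δ) (p i + δ))) ∧
        (s i = -1 → StrictAntiOn f (Set.Ioo (p i - δ) (p i + δ)))) := by
  classical
  set N := n - 1 with hN
  have hNn : N < n := by omega
  set P : ℕ → ℝ := fun j => p ⟨min j N, by omega⟩ with hPdef
  set Sg : ℕ → ℤ := fun j => s ⟨min j N, by omega⟩ with hSdef
  have hPval : ∀ (j : ℕ) (h : j < n), P j = p ⟨j, h⟩ := by
    intro j h; simp only [hPdef]; congr 1; apply Fin.ext; simp; omega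
  have hSval : ∀ (j : ℕ) (h : j < n), Sg j = s ⟨j, h⟩ := by
    intro j h; simp only [hSdef]; congr 1; apply Fin.ext; simp; omega
  have hPlt : ∀ i j : ℕ, i < j → (h : j < n) → P i < P j := by
    intro i j hij hj
    rw [hPval i (by omega), hPval j hj]
    exact hp (by simp [Fin.lt_def]; omega)
  have hPle : ∀ i j : ℕ, i ≤ j → (h : j < n) → P i ≤ P j := by
    intro i j hij hj
    rcases eq_or_lt_of_le hij with h | h
    · subst h; rfl
    · exact le_of_lt (hPlt i j h hj)
  have hP01 : ∀ j : ℕ, j < n → P j ∈ Set.Ioo (0:ℝ) 1 := by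
    intro j h; rw [hPval j h]; exact hp01 _
  have hSpm : ∀ j : ℕ, Sg j = -1 ∨ Sg j = 1 := fun j => hs _
  have hSabs : ∀ j : ℕ, |((Sg j : ℤ) : ℝ)| = 1 := by
    intro j; rcases hSpm j with h | h <;> simp [h]
  have hSne : ∀ j : ℕ, ((Sg j : ℤ) : ℝ) ≠ 0 := by
    intro j; rcases hSpm j with h | h <;> simp [h]
  have hSalt : ∀ j : ℕ, j + 1 < n → Sg (j + 1) = - Sg j := by
    intro j hj
    rw [hSval (j+1) hj, hSval j (by omega)]
    exact halt ⟨j, by omega⟩ hj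
  set m : ℕ → ℝ := fun j => (P j + P (j+1)) / 2 with hmdef
  have hmlt : ∀ j : ℕ, j + 1 < n → P j < m j ∧ m j < P (j+1) := by
    intro j hj
    have := hPlt j (j+1) (by omega) hj
    constructor <;> (simp only [hmdef]; linarith)
  have hmmono : ∀ i j : ℕ, i ≤ j → j + 1 < n → m i ≤ m j := by
    intro i j hij hj
    have h1 : P i ≤ P j := hPle i j hij (by omega)
    have h2 : P (i+1) ≤ P (j+1) := hPle (i+1) (j+1) (by omega) hj
    simp only [hmdef]; linarith
  have hne : ∀ (i : Fin n) (j : ℕ), j + 1 < n → p i ≠ m j := by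
    intro i j hj
    rcases le_or_gt i.val j with h | h
    · have h1 : P i.val ≤ P j := hPle _ _ h (by omega)
      have h2 := (hmlt j hj).1
      rw [hPval i.val i.isLt] at h1
      simp only [Fin.eta] at h1
      intro heq; rw [heq] at h1; linarith
    · have h1 : P (j+1) ≤ P i.val := hPle _ _ (by omega) i.isLt
      have h2 := (hmlt j hj).2
      rw [hPval i.val i.isLt] at h1
      simp only [Fin.eta] at h1
      intro heq; rw [heq] at h1; linarith
  set f : ℝ → ℝ := fun x =>
    ((Sg 0 : ℤ) : ℝ) * (x - P 0) +
      ∑ j ∈ Finset.range N, 2 * ((Sg (j+1) : ℤ) : ℝ) * max 0 (x - m j) with hfdef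
  have hf_cont : Continuous f := by
    apply Continuous.add
    · exact continuous_const.mul (continuous_id.sub continuous_const)
    · apply continuous_finset_sum
      intro j _
      exact continuous_const.mul (continuous_const.max (continuous_id.sub continuous_const))
  have hLval : ∀ k : ℕ, k < n → ∀ x : ℝ,
      ((Sg 0 : ℤ) : ℝ) * (x - P 0) +
        ∑ j ∈ Finset.range k, 2 * ((Sg (j+1) : ℤ) : ℝ) * (x - m j)
      = ((Sg k : ℤ) : ℝ) * (x - P k) := by
    intro k
    induction k with
    | zero => intro _ x; simp
    | succ k ih =>
      intro hk x
      rw [Finset.sum_range_succ, ← add_assoc, ih (by omega) x]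
      have h2 : ((Sg (k+1) : ℤ) : ℝ) = -((Sg k : ℤ) : ℝ) := by
        rw [hSalt k hk]; push_cast; ring
      have hmk : m k = (P k + P (k+1)) / 2 := rfl
      rw [h2, hmk]; ring
  have hpiece : ∀ k : ℕ, k < n → ∀ x : ℝ,
      (∀ j, j < k → m j ≤ x) → (∀ j, k ≤ j → j + 1 < n → x ≤ m j) →
      f x = ((Sg k : ℤ) : ℝ) * (x - P k) := by
    intro k hk x h1 h2
    have hkN : k ≤ N := by omega
    have hsplit : ∑ j ∈ Finset.range N, 2 * ((Sg (j+1) : ℤ) : ℝ) * max 0 (x - m j)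
        = ∑ j ∈ Finset.range k, 2 * ((Sg (j+1) : ℤ) : ℝ) * (x - m j) := by
      rw [← Finset.sum_range_add_sum_Ico _ hkN]
      have hz : ∑ j ∈ Finset.Ico k N, 2 * ((Sg (j+1) : ℤ) : ℝ) * max 0 (x - m j) = 0 := by
        apply Finset.sum_eq_zero
        intro j hj
        rw [Finset.mem_Ico] at hj
        have hx : x ≤ m j := h2 j hj.1 (by omega)
        have : max 0 (x - m j) = 0 := max_eq_left (by linarith)
        rw [this, mul_zero]
      rw [hz, add_zero]
      apply Finset.sum_congr rfl
      intro j hj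
      rw [Finset.mem_range] at hj
      have : max 0 (x - m j) = x - m j := max_eq_right (by linarith [h1 j hj])
      rw [this]
    show ((Sg 0 : ℤ) : ℝ) * (x - P 0) + _ = _
    rw [hsplit, hLval k hk x]
  -- the "piece index" function
  set kf : ℝ → ℕ := fun x => ((Finset.range N).filter (fun j => m j ≤ x)).card with hkfdef
  have hkf_lt : ∀ x : ℝ, kf x < n := by
    intro x
    have : kf x ≤ N := le_trans (Finset.card_filter_le _ _) (by simp)
    omega
  have hkf_a : ∀ (x : ℝ) (j : ℕ), j < kf x → m j ≤ x := by
    intro x j hj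
    by_contra hx
    push_neg at hx
    have hsub : (Finset.range N).filter (fun j => m j ≤ x) ⊆ Finset.range j := by
      intro i hi
      simp only [Finset.mem_filter, Finset.mem_range] at hi ⊢
      by_contra hij
      push_neg at hij
      have : m j ≤ m i := hmmono j i hij (by omega)
      linarith [hi.2]
    have h2 : kf x ≤ j := le_trans (Finset.card_le_card hsub) (by simp [Finset.card_range])
    omega
  have hkf_b : ∀ (x : ℝ) (j : ℕ), kf x ≤ j → j + 1 < n → x ≤ m j := by
    intro x j hkj hj
    by_contra hx
    push_neg at hx
    have hsub : Finset.range (j+1) ⊆ (Finset.range N).filter (fun j => m j ≤ x) := by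
      intro i hi
      simp only [Finset.mem_range] at hi
      simp only [Finset.mem_filter, Finset.mem_range]
      exact ⟨by omega, le_trans (hmmono i j (by omega) hj) (le_of_lt hx)⟩
    have h2 : j + 1 ≤ kf x := le_trans (by simp [Finset.card_range]) (Finset.card_le_card hsub)
    omega
  have hfx_piece : ∀ x : ℝ, f x = ((Sg (kf x) : ℤ) : ℝ) * (x - P (kf x)) := by
    intro x
    exact hpiece (kf x) (hkf_lt x) x (hkf_a x) (hkf_b x)
  refine ⟨↑((Finset.range N).image m), f, 0, Finset.finite_toSet _, ?_, ?_, hf_cont, ?_, ?_, ?_⟩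
  · -- C ⊆ Ioo 0 1
    intro x hx
    simp only [Finset.coe_image, Set.mem_image, Finset.coe_range, Set.mem_Iio] at hx
    obtain ⟨j, hj, rfl⟩ := hx
    have h1 := hP01 j (by omega)
    have h2 := hP01 (j+1) (by omega)
    simp only [hmdef, Set.mem_Ioo] at h1 h2 ⊢
    constructor <;> (obtain ⟨a, b⟩ := h1; obtain ⟨c, d⟩ := h2; linarith)
  · -- C ∩ range p = ∅
    apply Set.eq_empty_iff_forall_notMem.mpr
    rintro x ⟨hxC, i, rfl⟩
    simp only [Finset.coe_image, Set.mem_image, Finset.coe_range, Set.mem_Iio] at hxC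
    obtain ⟨j, hj, hmj⟩ := hxC
    exact hne i j (by omega) hmj.symm
  · -- dist preserving
    intro Sset hS1 hS2 x hx y hy
    have hIcc : ∀ a b : ℝ, a ∈ Sset → b ∈ Sset → Set.Icc a b ⊆ convexHull ℝ Sset := by
      intro a b ha hb
      exact (convex_convexHull ℝ Sset).ordConnected.out
        (subset_convexHull ℝ Sset ha) (subset_convexHull ℝ Sset hb)
    have hCmem : ∀ j : ℕ, j < N → (m j : ℝ) ∉ convexHull ℝ Sset := by
      intro j hj hmem
      have : m j ∈ convexHull ℝ Sset ∩ ↑((Finset.range N).image m) := by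
        refine ⟨hmem, ?_⟩
        simp only [Finset.coe_image, Set.mem_image, Finset.coe_range, Set.mem_Iio]
        exact ⟨j, hj, rfl⟩
      rw [hS2] at this
      exact this
    have hmem : ∀ j : ℕ, j < N → (m j ≤ x ↔ m j ≤ y) := by
      intro j hj
      constructor
      · intro h
        by_contra hc
        push_neg at hc
        exact hCmem j hj (hIcc y x hy hx ⟨le_of_lt hc, h⟩)
      · intro h
        by_contra hc
        push_neg at hc
        exact hCmem j hj (hIcc x y hx hy ⟨le_of_lt hc, h⟩)
    have hkxy : kf x = kf y := by
      simp only [hkfdef]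
      congr 1
      apply Finset.filter_congr
      intro j hj
      simp only [Finset.mem_range] at hj
      simp [hmem j hj]
    rw [hfx_piece x, hfx_piece y, hkxy]
    rw [show ((Sg (kf y) : ℤ) : ℝ) * (x - P (kf y)) - ((Sg (kf y) : ℤ) : ℝ) * (y - P (kf y))
        = ((Sg (kf y) : ℤ) : ℝ) * (x - y) by ring]
    rw [abs_mul, hSabs, one_mul]
  · -- fiber
    ext x
    simp only [Set.mem_setOf_eq, Set.mem_range]
    constructor
    · rintro ⟨hxI, hfx⟩
      rw [hfx_piece x] at hfx
      have hx0 : x - P (kf x) = 0 := by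
        rcases mul_eq_zero.mp hfx with h | h
        · exact absurd h (hSne _)
        · exact h
      refine ⟨⟨kf x, hkf_lt x⟩, ?_⟩
      rw [← hPval (kf x) (hkf_lt x)]
      linarith
    · rintro ⟨i, rfl⟩
      constructor
      · exact ⟨le_of_lt (hp01 i).1, le_of_lt (hp01 i).2⟩
      · have := hpiece i.val i.isLt (p i)
          (fun j hj => by
            have h1 := (hmlt j (by omega)).2
            have h2 : P (j+1) ≤ P i.val := hPle _ _ (by omega) i.isLt
            rw [hPval i.val i.isLt] at h2
            simp only [Fin.eta] at h2
            linarith)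
          (fun j hij hj => by
            have h1 := (hmlt j hj).1
            have h2 : P i.val ≤ P j := hPle _ _ hij (by omega)
            rw [hPval i.val i.isLt] at h2
            simp only [Fin.eta] at h2
            linarith)
        rw [this, hPval i.val i.isLt]
        simp
  · -- local monotonicity
    intro i
    set δ : ℝ := (insert (1:ℝ) ((Finset.range N).image fun j => |p i - m j|)).min'
      (Finset.insert_nonempty _ _) with hδdef
    have hδpos : 0 < δ := by
      rw [hδdef]
      rw [Finset.lt_min'_iff]
      intro b hb
      simp only [Finset.mem_insert, Finset.mem_image, Finset.mem_range] at hb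
      rcases hb with rfl | ⟨j, hj, rfl⟩
      · norm_num
      · exact abs_pos.mpr (sub_ne_zero.mpr (hne i j (by omega)))
    have hδle : ∀ j : ℕ, j < N → δ ≤ |p i - m j| := by
      intro j hj
      apply Finset.min'_le
      simp only [Finset.mem_insert, Finset.mem_image, Finset.mem_range]
      exact Or.inr ⟨j, hj, rfl⟩
    have hform : ∀ x ∈ Set.Ioo (p i - δ) (p i + δ),
        f x = ((Sg i.val : ℤ) : ℝ) * (x - p i) := by
      intro x hx
      have := hpiece i.val i.isLt x
        (fun j hj => by
          have h1 := (hmlt j (by omega)).2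
          have h2 : P (j+1) ≤ P i.val := hPle _ _ (by omega) i.isLt
          rw [hPval i.val i.isLt] at h2
          simp only [Fin.eta] at h2
          have hmlt' : m j < p i := by linarith
          have h3 := hδle j (by omega)
          rw [abs_of_pos (by linarith)] at h3
          linarith [hx.1])
        (fun j hij hj => by
          have h1 := (hmlt j hj).1
          have h2 : P i.val ≤ P j := hPle _ _ hij (by omega)
          rw [hPval i.val i.isLt] at h2
          simp only [Fin.eta] at h2
          have hmgt : p i < m j := by linarith
          have h3 := hδle j (by omega)
          rw [abs_of_neg (by linarith)] at h3
          linarith [hx.2])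
      rw [this, hPval i.val i.isLt]
    have hSgi : Sg i.val = s i := by
      rw [hSval i.val i.isLt]
    refine ⟨δ, hδpos, ?_, ?_⟩
    · intro hsi a ha b hb hab
      rw [hform a ha, hform b hb, hSgi, hsi]
      push_cast
      linarith
    · intro hsi a ha b hb hab
      rw [hform a ha, hform b hb, hSgi, hsi]
      push_cast
      linarith
end

section
/- For every finite set C ⊆ (0,1), there exists a continuous function f : ℝ → ℝ such that f is distance-preserving on every subset of [0,1] whose open convex hull contains no point of C, and for every c ∈ C, f is not injective on any neighborhood of c. (Every finite unsigned 1D crease pattern can be folded flat, e.g., by an accordion fold.) -/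
open Set MeasureTheory

theorem monotone_ncard_inter_Iic {α : Type*} [Preorder α] {s : Set α} (hs : s.Finite) :
    Monotone fun x => (s ∩ Iic x).ncard :=
  fun _ _ hxy => ncard_le_ncard (inter_subset_inter_right _ (Iic_subset_Iic.2 hxy))
    (hs.inter_of_left _)

noncomputable def foldSign (C : Set ℝ) (x : ℝ) : ℝ :=
  (-1) ^ (C ∩ Iic x).ncard

noncomputable def accordionFold (C : Set ℝ) (x : ℝ) : ℝ :=
  ∫ t in (0 : ℝ)..x, foldSign C t

section

variable {C : Set ℝ}

theorem abs_foldSign (x : ℝ) : |foldSign C x| = 1 := by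
  simp [foldSign]

theorem foldSign_eq_mul_neg_one_pow (hC : C.Finite) {x y : ℝ} (hxy : x ≤ y) :
    foldSign C y = foldSign C x * (-1) ^ (C ∩ Ioc x y).ncard := by
  have hsplit : C ∩ Iic y = (C ∩ Iic x) ∪ (C ∩ Ioc x y) := by
    rw [← inter_union_distrib_left, Iic_union_Ioc_eq_Iic hxy]
  have hdisj : Disjoint (C ∩ Iic x) (C ∩ Ioc x y) :=
    (Iic_disjoint_Ioc le_rfl).mono inter_subset_right inter_subset_right
  rw [foldSign, foldSign, hsplit, ncard_union_eq hdisj (hC.inter_of_left _) (hC.inter_of_left _),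
    pow_add]

theorem foldSign_eq_of_disjoint (hC : C.Finite) {x y : ℝ} (hxy : x ≤ y)
    (h : Disjoint C (Ioc x y)) : foldSign C y = foldSign C x := by
  rw [foldSign_eq_mul_neg_one_pow hC hxy, h.inter_eq, ncard_empty, pow_zero, mul_one]

theorem foldSign_eq_neg (hC : C.Finite) {x c : ℝ} (hxc : x < c) (h : C ∩ Ioc x c = {c}) :
    foldSign C c = -foldSign C x := by
  rw [foldSign_eq_mul_neg_one_pow hC hxc.le, h, ncard_singleton, pow_one, mul_neg_one]

theorem measurable_foldSign (hC : C.Finite) : Measurable (foldSign C) :=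
  measurable_const.pow (monotone_ncard_inter_Iic hC).measurable

theorem intervalIntegrable_foldSign (hC : C.Finite) (a b : ℝ) :
    IntervalIntegrable (foldSign C) volume a b := by
  rw [intervalIntegrable_iff]
  refine Measure.integrableOn_of_bounded (M := 1) measure_Ioc_lt_top.ne
    (measurable_foldSign hC).aestronglyMeasurable (ae_of_all _ fun t => ?_)
  rw [Real.norm_eq_abs, abs_foldSign]

theorem continuous_accordionFold (hC : C.Finite) : Continuous (accordionFold C) :=
  intervalIntegral.continuous_primitive (intervalIntegrable_foldSign hC) 0

theorem accordionFold_sub_accordionFold (hC : C.Finite) {x y : ℝ} (hxy : x ≤ y)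
    (h : Disjoint C (Ioo x y)) :
    accordionFold C y - accordionFold C x = foldSign C x * (y - x) := by
  have hconst : EqOn (foldSign C) (fun _ => foldSign C x) (Ioo x y) := fun t ht =>
    foldSign_eq_of_disjoint hC ht.1.le
      (h.mono_right (Ioc_subset_Ioo_right ht.2))
  rw [accordionFold, accordionFold, intervalIntegral.integral_interval_sub_left
      (intervalIntegrable_foldSign hC _ _) (intervalIntegrable_foldSign hC _ _),
    intervalIntegral.integral_of_le hxy, integral_Ioc_eq_integral_Ioo,
    setIntegral_congr_fun measurableSet_Ioo hconst, setIntegral_const,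
    Real.volume_real_Ioo_of_le hxy, smul_eq_mul, mul_comm]

theorem Ioo_subset_interior_convexHull {S : Set ℝ} {x y : ℝ} (hx : x ∈ S) (hy : y ∈ S) :
    Ioo x y ⊆ interior (convexHull ℝ S) := by
  rw [← interior_Icc]
  exact interior_mono ((convex_convexHull ℝ S).ordConnected.out
    (subset_convexHull ℝ S hx) (subset_convexHull ℝ S hy))

theorem distPreservingOn_accordionFold (hC : C.Finite) {S : Set ℝ}
    (hS : interior (convexHull ℝ S) ∩ C = ∅) : DistPreservingOn (accordionFold C) S := by
  have hdisj : Disjoint C (interior (convexHull ℝ S)) := by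
    rw [disjoint_iff_inter_eq_empty, inter_comm, hS]
  suffices ∀ x ∈ S, ∀ y ∈ S, x ≤ y → |accordionFold C y - accordionFold C x| = |y - x| by
    intro x hx y hy
    rcases le_total x y with hxy | hyx
    · rw [abs_sub_comm, this x hx y hy hxy, abs_sub_comm]
    · exact this y hy x hx hyx
  intro x hx y hy hxy
  rw [accordionFold_sub_accordionFold hC hxy
      (hdisj.mono_right (Ioo_subset_interior_convexHull hx hy)),
    abs_mul, abs_foldSign, one_mul]

theorem accordionFold_sub_eq_accordionFold_add (hC : C.Finite) {c δ : ℝ} (hc : c ∈ C)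
    (hδ : 0 < δ) (hisol : C ∩ Icc (c - δ) (c + δ) ⊆ {c}) :
    accordionFold C (c - δ) = accordionFold C (c + δ) := by
  have hnear : ∀ c' ∈ C, c - δ ≤ c' → c' ≤ c + δ → c' = c := fun c' hc' h₁ h₂ =>
    hisol ⟨hc', h₁, h₂⟩
  have hleft : Disjoint C (Ioo (c - δ) c) := disjoint_left.2 fun c' hc' ⟨h₁, h₂⟩ =>
    h₂.ne (hnear c' hc' h₁.le (by linarith))
  have hright : Disjoint C (Ioo c (c + δ)) := disjoint_left.2 fun c' hc' ⟨h₁, h₂⟩ =>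
    h₁.ne' (hnear c' hc' (by linarith) h₂.le)
  have hflip : foldSign C c = -foldSign C (c - δ) := by
    refine foldSign_eq_neg hC (by linarith) (Subset.antisymm ?_ ?_)
    · exact fun c' ⟨hc', h₁, h₂⟩ => hnear c' hc' h₁.le (by linarith)
    · exact singleton_subset_iff.2 ⟨hc, by linarith, le_rfl⟩
  have h₁ := accordionFold_sub_accordionFold hC (by linarith) hleft
  have h₂ := accordionFold_sub_accordionFold hC (by linarith) hright
  rw [hflip] at h₂
  linarith

theorem not_injOn_accordionFold (hC : C.Finite) {c : ℝ} (hc : c ∈ C) {U : Set ℝ}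
    (hU : U ∈ nhds c) : ¬ InjOn (accordionFold C) U := by
  have hnhds : U ∩ (C \ {c})ᶜ ∈ nhds c :=
    Filter.inter_mem hU (hC.sdiff.isClosed.isOpen_compl.mem_nhds (by simp))
  obtain ⟨δ, hδ, hsub⟩ := (nhds_basis_Icc_pos c).mem_iff.1 hnhds
  have hisol : C ∩ Icc (c - δ) (c + δ) ⊆ {c} := fun c' ⟨hc', hc'I⟩ =>
    by_contra fun hne => (hsub hc'I).2 ⟨hc', hne⟩
  intro hinj
  have := hinj (hsub ⟨by linarith, by linarith⟩).1 (hsub ⟨by linarith, by linarith⟩).1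
    (accordionFold_sub_eq_accordionFold_add hC hc hδ hisol)
  linarith

end

theorem crease_pattern_folds_flat_general
    (C : Set ℝ) (hCfin : C.Finite) :
    ∃ f : ℝ → ℝ, Continuous f ∧
      (∀ S : Set ℝ, S ⊆ Set.Icc (0:ℝ) 1 → interior (convexHull ℝ S) ∩ C = ∅ →
        DistPreservingOn f S) ∧
      (∀ c ∈ C, ∀ U ∈ nhds c, ¬ Set.InjOn f U) :=
  ⟨accordionFold C, continuous_accordionFold hCfin,
    fun _ _ hS => distPreservingOn_accordionFold hCfin hS,
    fun _ hc _ hU => not_injOn_accordionFold hCfin hc hU⟩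

/-- Every finite unsigned 1D crease pattern can be folded flat: for every
finite crease set `C ⊆ (0,1)` there is a continuous map `f` that is
distance-preserving on every subset of `[0,1]` whose open convex hull avoids
`C`, and that genuinely folds (is not injective on any neighborhood) at each
crease. -/
theorem crease_pattern_folds_flat
    (C : Set ℝ) (hCfin : C.Finite) (hCsub : C ⊆ Set.Ioo (0:ℝ) 1) :
    ∃ f : ℝ → ℝ, Continuous f ∧
      (∀ S : Set ℝ, S ⊆ Set.Icc (0:ℝ) 1 → interior (convexHull ℝ S) ∩ C = ∅ →
        DistPreservingOn f S) ∧
      (∀ c ∈ C, ∀ U ∈ nhds c, ¬ Set.InjOn f U) :=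
  crease_pattern_folds_flat_general C hCfin
end

section
/- Let c ∈ ℝ, δ > 0, and let f : ℝ → ℝ be such that f is distance-preserving on [c − δ, c] and distance-preserving on [c, c + δ], and f is not injective on any neighborhood of c. Then f (c + t) = f (c − t) for all t ∈ [0, δ]. -/
/-- A 1D flat folding that genuinely folds at a crease `c` acts as a reflection
across `c` near `c`: if `f` is distance-preserving on `[c−δ, c]` and on
`[c, c+δ]` but not injective on any neighborhood of `c`, then
`f (c+t) = f (c−t)` for all `t ∈ [0,δ]`. -/
theorem fold_is_reflection_near_crease
    (c δ : ℝ) (hδ : 0 < δ) (f : ℝ → ℝ)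
    (hleft : DistPreservingOn f (Set.Icc (c - δ) c))
    (hright : DistPreservingOn f (Set.Icc c (c + δ)))
    (hfold : ∀ U ∈ nhds c, ¬ Set.InjOn f U) :
    ∀ t ∈ Set.Icc (0:ℝ) δ, f (c + t) = f (c - t) := by
  have hcR : c ∈ Set.Icc c (c+δ) := ⟨le_refl _, by linarith⟩
  have hδR : c + δ ∈ Set.Icc c (c+δ) := ⟨by linarith, le_refl _⟩
  have hcL : c ∈ Set.Icc (c-δ) c := ⟨by linarith, le_refl _⟩
  have hδL : c - δ ∈ Set.Icc (c-δ) c := ⟨le_refl _, by linarith⟩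
  have memR : ∀ s ∈ Set.Icc (0:ℝ) δ, c + s ∈ Set.Icc c (c+δ) :=
    fun s hs => ⟨by linarith [hs.1], by linarith [hs.2]⟩
  have memL : ∀ s ∈ Set.Icc (0:ℝ) δ, c - s ∈ Set.Icc (c-δ) c :=
    fun s hs => ⟨by linarith [hs.2], by linarith [hs.1]⟩
  have habsR : ∀ s ∈ Set.Icc (0:ℝ) δ, |f (c+s) - f c| = s := by
    intro s hs
    have h := hright _ (memR s hs) _ hcR
    rw [show c + s - c = s by ring, abs_of_nonneg hs.1] at h
    exact h
  have habsR' : ∀ s ∈ Set.Icc (0:ℝ) δ, |f (c+s) - f (c+δ)| = δ - s := by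
    intro s hs
    have h := hright _ (memR s hs) _ hδR
    rw [show c + s - (c + δ) = -(δ - s) by ring, abs_neg,
        show |δ - s| = δ - s from abs_of_nonneg (by linarith [hs.2])] at h
    exact h
  have habsL : ∀ s ∈ Set.Icc (0:ℝ) δ, |f (c-s) - f c| = s := by
    intro s hs
    have h := hleft _ (memL s hs) _ hcL
    rw [show c - s - c = -s by ring, abs_neg, abs_of_nonneg hs.1] at h
    exact h
  have habsL' : ∀ s ∈ Set.Icc (0:ℝ) δ, |f (c-s) - f (c-δ)| = δ - s := by
    intro s hs
    have h := hleft _ (memL s hs) _ hδL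
    rw [show c - s - (c - δ) = δ - s by ring,
        show |δ - s| = δ - s from abs_of_nonneg (by linarith [hs.2])] at h
    exact h
  have hδmem : δ ∈ Set.Icc (0:ℝ) δ := ⟨hδ.le, le_refl _⟩
  have hRcase : f (c+δ) = f c + δ ∨ f (c+δ) = f c - δ := by
    have h := habsR δ hδmem
    rcases (abs_eq hδ.le).mp h with h | h
    · left; linarith
    · right; linarith
  have hLcase : f (c-δ) = f c + δ ∨ f (c-δ) = f c - δ := by
    have h := habsL δ hδmem
    rcases (abs_eq hδ.le).mp h with h | h
    · left; linarith
    · right; linarith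
  have hRpos : f (c+δ) = f c + δ → ∀ s ∈ Set.Icc (0:ℝ) δ, f (c+s) = f c + s := by
    intro hE s hs
    have h1 := habsR s hs
    have h2 := habsR' s hs
    rcases abs_cases (f (c+s) - f c) with ⟨e1, _⟩ | ⟨e1, _⟩ <;>
      rcases abs_cases (f (c+s) - f (c+δ)) with ⟨e2, _⟩ | ⟨e2, _⟩ <;>
      linarith [hs.1, hs.2]
  have hRneg : f (c+δ) = f c - δ → ∀ s ∈ Set.Icc (0:ℝ) δ, f (c+s) = f c - s := by
    intro hE s hs
    have h1 := habsR s hs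
    have h2 := habsR' s hs
    rcases abs_cases (f (c+s) - f c) with ⟨e1, _⟩ | ⟨e1, _⟩ <;>
      rcases abs_cases (f (c+s) - f (c+δ)) with ⟨e2, _⟩ | ⟨e2, _⟩ <;>
      linarith [hs.1, hs.2]
  have hLpos : f (c-δ) = f c + δ → ∀ s ∈ Set.Icc (0:ℝ) δ, f (c-s) = f c + s := by
    intro hE s hs
    have h1 := habsL s hs
    have h2 := habsL' s hs
    rcases abs_cases (f (c-s) - f c) with ⟨e1, _⟩ | ⟨e1, _⟩ <;>
      rcases abs_cases (f (c-s) - f (c-δ)) with ⟨e2, _⟩ | ⟨e2, _⟩ <;>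
      linarith [hs.1, hs.2]
  have hLneg : f (c-δ) = f c - δ → ∀ s ∈ Set.Icc (0:ℝ) δ, f (c-s) = f c - s := by
    intro hE s hs
    have h1 := habsL s hs
    have h2 := habsL' s hs
    rcases abs_cases (f (c-s) - f c) with ⟨e1, _⟩ | ⟨e1, _⟩ <;>
      rcases abs_cases (f (c-s) - f (c-δ)) with ⟨e2, _⟩ | ⟨e2, _⟩ <;>
      linarith [hs.1, hs.2]
  rcases hRcase with hR | hR <;> rcases hLcase with hL | hL
  · intro t ht
    rw [hRpos hR t ht, hLpos hL t ht]
  · -- R positive, L negative : f x = f c + (x - c), injective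
    exfalso
    refine hfold (Set.Icc (c-δ) (c+δ)) (Icc_mem_nhds (by linarith) (by linarith)) ?_
    have key : ∀ x ∈ Set.Icc (c-δ) (c+δ), f x = f c + (x - c) := by
      intro x hx
      rcases le_total c x with h | h
      · have := hRpos hR (x - c) ⟨by linarith, by linarith [hx.2]⟩
        rw [show c + (x - c) = x by ring] at this
        linarith
      · have := hLneg hL (c - x) ⟨by linarith, by linarith [hx.1]⟩
        rw [show c - (c - x) = x by ring] at this
        linarith
    intro x hx y hy hxy
    have := key x hx
    have := key y hy
    linarith
  · -- R negative, L positive : f x = f c - (x - c), injective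
    exfalso
    refine hfold (Set.Icc (c-δ) (c+δ)) (Icc_mem_nhds (by linarith) (by linarith)) ?_
    have key : ∀ x ∈ Set.Icc (c-δ) (c+δ), f x = f c - (x - c) := by
      intro x hx
      rcases le_total c x with h | h
      · have := hRneg hR (x - c) ⟨by linarith, by linarith [hx.2]⟩
        rw [show c + (x - c) = x by ring] at this
        linarith
      · have := hLpos hL (c - x) ⟨by linarith, by linarith [hx.1]⟩
        rw [show c - (c - x) = x by ring] at this
        linarith
    intro x hx y hy hxy
    have := key x hx
    have := key y hy
    linarith
  · intro t ht
    rw [hRneg hR t ht, hLneg hL t ht]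
end

section
/- Let X and Y be finite nonempty subsets of the open interval (0,1). Then there exist continuous functions h, v : ℝ → ℝ, finite sets C_X ⊆ (0,1) with C_X ∩ X = ∅ and C_Y ⊆ (0,1) with C_Y ∩ Y = ∅, such that h is distance-preserving on every subset of [0,1] whose convex hull contains no point of C_X, v is distance-preserving on every subset of [0,1] whose convex hull contains no point of C_Y, and there exist a, b ∈ ℝ with {p ∈ Set.Icc (0:ℝ) 1 ×ˢ Set.Icc (0:ℝ) 1 : h p.1 = a ∧ v p.2 = b} = X ×ˢ Y. -/
/-- One-dimensional accordion fold: a continuous piecewise isometry whose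
level set at `a` is exactly the finite set `s`. -/
lemma accordion : ∀ (s : Finset ℝ) (hs : s.Nonempty),
    ∃ (h : ℝ → ℝ) (C : Finset ℝ) (a ε : ℝ),
      Continuous h ∧ (ε = 1 ∨ ε = -1) ∧
      (∀ c ∈ C, s.min' hs < c ∧ c < s.max' hs) ∧
      (∀ c ∈ C, c ∉ s) ∧
      (∀ x, h x = a ↔ x ∈ s) ∧
      (∀ x, s.max' hs ≤ x → h x = a + ε * (x - s.max' hs)) ∧
      (∀ x y : ℝ, (∀ c ∈ C, c ∉ Set.uIcc x y) → |h x - h y| = |x - y|) := by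
  intro s
  induction s using Finset.strongInduction with
  | _ s ih =>
  intro hs
  set M := s.max' hs with hMdef
  have hMmem : M ∈ s := s.max'_mem hs
  by_cases hsing : s.erase M = ∅
  · -- s = {M}
    have hsM : s = {M} := by
      rcases (Finset.erase_eq_empty_iff s M).mp hsing with h | h
      · exact absurd h (Finset.nonempty_iff_ne_empty.mp hs)
      · exact h
    refine ⟨id, ∅, M, 1, continuous_id, Or.inl rfl, by simp, by simp, ?_, ?_, ?_⟩
    · intro x; simp [hsM]
    · intro x hx
      simp only [id]
      ring
    · intro x y _; rfl
  · have hs' : (s.erase M).Nonempty := Finset.nonempty_iff_ne_empty.mpr hsing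
    set s' := s.erase M with hs'def
    have hss : s' ⊂ s := Finset.erase_ssubset hMmem
    obtain ⟨h', C', a', ε', cont', hε', hCmem', hCnotin', hlev', hterm', hiso'⟩ :=
      ih s' hss hs'
    set M' := s'.max' hs' with hM'def
    have hM'mem' : M' ∈ s' := s'.max'_mem hs'
    have hM'mem : M' ∈ s := Finset.mem_of_mem_erase hM'mem'
    have hM'ne : M' ≠ M := Finset.ne_of_mem_erase hM'mem'
    have hM'lt : M' < M := lt_of_le_of_ne (s.le_max' M' hM'mem) hM'ne
    set c : ℝ := (M' + M) / 2 with hcdef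
    have hM'c : M' < c := by rw [hcdef]; linarith
    have hcM : c < M := by rw [hcdef]; linarith
    have hle' : ∀ x ∈ s', x ≤ M' := fun x hx => s'.le_max' x hx
    have hmem_s' : ∀ x ∈ s, x ≠ M → x ∈ s' := fun x hx hne =>
      Finset.mem_erase.mpr ⟨hne, hx⟩
    set h : ℝ → ℝ := fun x => if x ≤ c then h' x else h' c - ε' * (x - c) with hhdef
    have hceq : h' c = a' + ε' * (c - M') := hterm' c hM'c.le
    have hright : ∀ x : ℝ, c < x → h x = a' + ε' * (M - x) := by
      intro x hx
      have : ¬ x ≤ c := not_le.mpr hx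
      simp only [hhdef, if_neg this]
      rw [hceq, hcdef]
      ring
    have hleft : ∀ x : ℝ, x ≤ c → h x = h' x := by
      intro x hx; simp only [hhdef, if_pos hx]
    have hεne : ε' ≠ 0 := by rcases hε' with h | h <;> rw [h] <;> norm_num
    have habs : |ε'| = 1 := by rcases hε' with h | h <;> rw [h] <;> norm_num
    have hminle : s.min' hs ≤ s'.min' hs' := s.min'_le _ (Finset.mem_of_mem_erase (s'.min'_mem hs'))
    have hminM' : s.min' hs ≤ M' := s.min'_le M' hM'mem
    refine ⟨h, insert c C', a', -ε', ?_, ?_, ?_, ?_, ?_, ?_, ?_⟩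
    · -- continuity
      apply Continuous.if_le cont' (by fun_prop) continuous_id continuous_const
      intro x hx
      subst hx; ring
    · rcases hε' with h | h <;> [right; left] <;> rw [h] <;> norm_num
    · intro d hd
      rcases Finset.mem_insert.mp hd with heq | hd
      · rw [heq]; exact ⟨lt_of_le_of_lt hminM' hM'c, hcM⟩
      · obtain ⟨h1, h2⟩ := hCmem' d hd
        exact ⟨lt_of_le_of_lt hminle h1, lt_trans h2 (lt_trans hM'c hcM)⟩
    · intro d hd
      rcases Finset.mem_insert.mp hd with heq | hd
      · rw [heq]
        intro hmem
        have : c ∈ s' := hmem_s' c hmem (ne_of_lt hcM)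
        exact absurd (hle' c this) (not_le.mpr hM'c)
      · intro hmem
        have hdlt : d < M := lt_trans (hCmem' d hd).2 (lt_trans hM'c hcM)
        exact hCnotin' d hd (hmem_s' d hmem (ne_of_lt hdlt))
    · -- level set
      intro x
      by_cases hx : x ≤ c
      · rw [hleft x hx, hlev' x]
        constructor
        · intro h1; exact Finset.mem_of_mem_erase h1
        · intro h1
          refine hmem_s' x h1 ?_
          intro rfl'
          rw [rfl'] at hx
          exact absurd hx (not_le.mpr hcM)
      · rw [hright x (not_le.mp hx)]
        constructor
        · intro h1
          have : ε' * (M - x) = 0 := by linarith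
          have : M - x = 0 := by
            rcases mul_eq_zero.mp this with h2 | h2
            · exact absurd h2 hεne
            · exact h2
          have : x = M := by linarith
          rw [this]; exact hMmem
        · intro h1
          have hx' : c < x := not_le.mp hx
          have : x = M := by
            by_contra hne
            exact absurd (hle' x (hmem_s' x h1 hne)) (not_le.mpr (lt_trans hM'c hx'))
          rw [this]; ring
    · -- terminal slope
      intro x hx
      have hcx : c < x := lt_of_lt_of_le hcM hx
      rw [hright x hcx]
      ring
    · -- isometry away from creases
      intro x y hcc
      have hcnot : c ∉ Set.uIcc x y := hcc c (Finset.mem_insert_self c C')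
      rw [Set.mem_uIcc] at hcnot
      push_neg at hcnot
      obtain ⟨h1, h2⟩ := hcnot
      by_cases hxc : x ≤ c
      · by_cases hyc : y ≤ c
        · rw [hleft x hxc, hleft y hyc]
          exact hiso' x y (fun d hd => hcc d (Finset.mem_insert_of_mem hd))
        · -- x ≤ c < y, so c ∈ uIcc: contradiction
          exact absurd (h1 hxc) (not_lt.mpr (not_le.mp hyc).le)
      · by_cases hyc : y ≤ c
        · exact absurd (h2 hyc) (not_lt.mpr (not_le.mp hxc).le)
        · rw [hright x (not_le.mp hxc), hright y (not_le.mp hyc)]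
          have : a' + ε' * (M - x) - (a' + ε' * (M - y)) = ε' * (y - x) := by ring
          rw [this, abs_mul, habs, one_mul, abs_sub_comm]

/-- Apply the accordion lemma to a finite nonempty subset of `(0,1)`. -/
lemma accordion_set (X : Set ℝ) (hXfin : X.Finite) (hXne : X.Nonempty)
    (hXsub : X ⊆ Set.Ioo (0:ℝ) 1) :
    ∃ (h : ℝ → ℝ) (C : Set ℝ) (a : ℝ),
      Continuous h ∧ C.Finite ∧ C ⊆ Set.Ioo (0:ℝ) 1 ∧ C ∩ X = ∅ ∧
      (∀ S : Set ℝ, S ⊆ Set.Icc (0:ℝ) 1 → (convexHull ℝ S) ∩ C = ∅ →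
        DistPreservingOn h S) ∧
      (∀ x, h x = a ↔ x ∈ X) := by
  set s : Finset ℝ := hXfin.toFinset with hsdef
  have hmem : ∀ x, x ∈ s ↔ x ∈ X := fun x => hXfin.mem_toFinset
  have hs : s.Nonempty := by
    obtain ⟨x, hx⟩ := hXne
    exact ⟨x, (hmem x).mpr hx⟩
  obtain ⟨h, C, a, ε, cont, hε, hCmem, hCnotin, hlev, hterm, hiso⟩ := accordion s hs
  have hminmem : s.min' hs ∈ X := (hmem _).mp (s.min'_mem hs)
  have hmaxmem : s.max' hs ∈ X := (hmem _).mp (s.max'_mem hs)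
  refine ⟨h, ↑C, a, cont, C.finite_toSet, ?_, ?_, ?_, fun x => (hlev x).trans (hmem x)⟩
  · intro d hd
    obtain ⟨h1, h2⟩ := hCmem d hd
    exact ⟨lt_trans (hXsub hminmem).1 h1, lt_trans h2 (hXsub hmaxmem).2⟩
  · ext d
    simp only [Set.mem_inter_iff, Finset.coe_sort_coe, Finset.mem_coe, Set.mem_empty_iff_false,
      iff_false, not_and]
    intro hd hdX
    exact hCnotin d hd ((hmem d).mpr hdX)
  · intro S hS hhull x hx y hy
    apply hiso
    intro d hd hduIcc
    have hseg : Set.uIcc x y ⊆ convexHull ℝ S := by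
      rw [← segment_eq_uIcc]
      exact (convex_convexHull ℝ S).segment_subset (subset_convexHull ℝ S hx)
        (subset_convexHull ℝ S hy)
    have : d ∈ convexHull ℝ S ∩ (↑C : Set ℝ) := ⟨hseg hduIcc, hd⟩
    rw [hhull] at this
    exact this

/-- Sufficiency direction for orthogonal fold & punch: every combinatorial
rectangle `X ×ˢ Y` of holes, with `X, Y` finite nonempty subsets of `(0,1)`,
can be punched out by an orthogonal flat folding `(x, y) ↦ (h x, v y)`. -/
theorem fold_and_punch_rectangle_solvable
    (X Y : Set ℝ) (hXfin : X.Finite) (hYfin : Y.Finite)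
    (hXne : X.Nonempty) (hYne : Y.Nonempty)
    (hXsub : X ⊆ Set.Ioo (0:ℝ) 1) (hYsub : Y ⊆ Set.Ioo (0:ℝ) 1) :
    ∃ (h v : ℝ → ℝ) (CX CY : Set ℝ),
      Continuous h ∧ Continuous v ∧
      CX.Finite ∧ CX ⊆ Set.Ioo (0:ℝ) 1 ∧ CX ∩ X = ∅ ∧
      CY.Finite ∧ CY ⊆ Set.Ioo (0:ℝ) 1 ∧ CY ∩ Y = ∅ ∧
      (∀ S : Set ℝ, S ⊆ Set.Icc (0:ℝ) 1 → (convexHull ℝ S) ∩ CX = ∅ →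
        DistPreservingOn h S) ∧
      (∀ S : Set ℝ, S ⊆ Set.Icc (0:ℝ) 1 → (convexHull ℝ S) ∩ CY = ∅ →
        DistPreservingOn v S) ∧
      ∃ a b : ℝ,
        {p ∈ Set.Icc (0:ℝ) 1 ×ˢ Set.Icc (0:ℝ) 1 | h p.1 = a ∧ v p.2 = b}
          = X ×ˢ Y := by
  obtain ⟨h, CX, a, conth, hCXfin, hCXsub, hCXX, hdph, hleva⟩ :=
    accordion_set X hXfin hXne hXsub
  obtain ⟨v, CY, b, contv, hCYfin, hCYsub, hCYY, hdpv, hlevb⟩ :=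
    accordion_set Y hYfin hYne hYsub
  refine ⟨h, v, CX, CY, conth, contv, hCXfin, hCXsub, hCXX, hCYfin, hCYsub, hCYY,
    hdph, hdpv, a, b, ?_⟩
  ext p
  simp only [Set.mem_sep_iff, Set.mem_prod]
  constructor
  · rintro ⟨⟨-, -⟩, h1, h2⟩
    exact ⟨(hleva p.1).mp h1, (hlevb p.2).mp h2⟩
  · rintro ⟨h1, h2⟩
    exact ⟨⟨Set.Ioo_subset_Icc_self (hXsub h1), Set.Ioo_subset_Icc_self (hYsub h2)⟩,
      (hleva p.1).mpr h1, (hlevb p.2).mpr h2⟩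
end

section
/- Let α, β, k₁, k₂ ∈ ℝ with α ≠ 0 and β ≠ 0, let I₁ = [a₁, b₁] and I₂ = [a₂, b₂] with a₁ < b₁ and a₂ < b₂, and let h, v : ℝ → ℝ be such that h is distance-preserving on I₁ and on I₂, and v is distance-preserving on {α * x + k₁ : x ∈ I₁} and on {β * x + k₂ : x ∈ I₂}. If there exist γ, m ∈ ℝ such that v (α * x + k₁) = γ * h x + m for all x ∈ I₁ and v (β * x + k₂) = γ * h x + m for all x ∈ I₂, then β = α or β = −α. -/
/-- If an orthogonal folding `(x, y) ↦ (h x, v y)` brings a segment of slope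
`α ≠ 0` and a segment of slope `β ≠ 0` onto a common line (of slope `γ`), then
`β = α` or `β = −α`: cuts of slopes not equal up to sign cannot lie on one cut
line, so such instances of orthogonal fold & cut are unsolvable. -/
theorem slopes_on_common_line_eq_pm
    (α β k₁ k₂ : ℝ) (hα : α ≠ 0) (hβ : β ≠ 0)
    (a₁ b₁ a₂ b₂ : ℝ) (h₁ : a₁ < b₁) (h₂ : a₂ < b₂)
    (h v : ℝ → ℝ)
    (hh₁ : DistPreservingOn h (Set.Icc a₁ b₁))
    (hh₂ : DistPreservingOn h (Set.Icc a₂ b₂))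
    (hv₁ : DistPreservingOn v ((fun x => α * x + k₁) '' Set.Icc a₁ b₁))
    (hv₂ : DistPreservingOn v ((fun x => β * x + k₂) '' Set.Icc a₂ b₂))
    (hcommon : ∃ γ m : ℝ,
      (∀ x ∈ Set.Icc a₁ b₁, v (α * x + k₁) = γ * h x + m) ∧
      (∀ x ∈ Set.Icc a₂ b₂, v (β * x + k₂) = γ * h x + m)) :
    β = α ∨ β = -α := by
  obtain ⟨γ, m, hc₁, hc₂⟩ := hcommon
  have key : ∀ (c k a b : ℝ), a < b → DistPreservingOn h (Set.Icc a b) →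
      DistPreservingOn v ((fun x => c * x + k) '' Set.Icc a b) →
      (∀ x ∈ Set.Icc a b, v (c * x + k) = γ * h x + m) → |γ| = |c| := by
    intro c k a b hab hh hv hc
    have ha : a ∈ Set.Icc a b := ⟨le_refl a, hab.le⟩
    have hb : b ∈ Set.Icc a b := ⟨hab.le, le_refl b⟩
    have e1 : |v (c * a + k) - v (c * b + k)| = |(c * a + k) - (c * b + k)| :=
      hv _ ⟨a, ha, rfl⟩ _ ⟨b, hb, rfl⟩
    rw [hc a ha, hc b hb] at e1
    have e2 : γ * h a + m - (γ * h b + m) = γ * (h a - h b) := by ring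
    have e3 : (c * a + k) - (c * b + k) = c * (a - b) := by ring
    rw [e2, e3, abs_mul, abs_mul, hh a ha b hb] at e1
    have hne : |a - b| ≠ 0 := by
      simp [sub_eq_zero]; exact fun hh' => absurd hh' hab.ne
    exact mul_right_cancel₀ hne e1
  have g1 : |γ| = |α| := key α k₁ a₁ b₁ h₁ hh₁ hv₁ hc₁
  have g2 : |γ| = |β| := key β k₂ a₂ b₂ h₂ hh₂ hv₂ hc₂
  have : |β| = |α| := g2 ▸ g1
  exact abs_eq_abs.mp this
end

section
/- Let Y be a finite nonempty subset of (0,1). Then there exist a continuous v : ℝ → ℝ, a finite set C ⊆ (0,1) with C ∩ Y = ∅ such that v is distance-preserving on every subset of [0,1] whose convex hull contains no point of C, and a real c, such that {p ∈ Set.Icc (0:ℝ) 1 ×ˢ Set.Icc (0:ℝ) 1 : v p.2 = c} = Set.Icc (0:ℝ) 1 ×ˢ Y. -/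
noncomputable def accordion_s13 : List ℝ → ℝ → ℝ
  | [], t => t
  | [a], t => t - a
  | a :: b :: l, t => if t ≤ (a + b) / 2 then t - a else -accordion_s13 (b :: l) t

noncomputable def creases : List ℝ → List ℝ
  | a :: b :: l => (a + b) / 2 :: creases (b :: l)
  | _ => []

lemma head_le_of_mem_of_pairwise_lt {α : Type*} [Preorder α] {b x : α} {l : List α}
    (hl : (b :: l).Pairwise (· < ·)) (hx : x ∈ b :: l) : b ≤ x :=
  (List.mem_cons.1 hx).elim (·.ge) fun hx => (List.rel_of_pairwise_cons hl hx).le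

lemma accordion_cons_of_le {b t : ℝ} {l : List ℝ} (hl : (b :: l).Pairwise (· < ·)) (ht : t ≤ b) :
    accordion_s13 (b :: l) t = t - b := by
  cases l with
  | nil => rfl
  | cons c l =>
    have hbc : b < c := List.rel_of_pairwise_cons hl List.mem_cons_self
    exact if_pos (by linarith)

lemma continuous_accordion {l : List ℝ} (hl : l.Pairwise (· < ·)) : Continuous (accordion_s13 l) := by
  induction l with
  | nil => exact continuous_id
  | cons a l ih =>
    cases l with
    | nil => exact continuous_sub_right a
    | cons b l =>
      have hab : a < b := List.rel_of_pairwise_cons hl List.mem_cons_self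
      have htail := hl.of_cons
      refine Continuous.if_le (continuous_id.sub continuous_const) (ih htail).neg
        continuous_id continuous_const fun t ht => ?_
      rw [accordion_cons_of_le htail (by linarith)]
      linarith

lemma accordion_eq_zero_iff {l : List ℝ} (hl : l.Pairwise (· < ·)) (hne : l ≠ []) (t : ℝ) :
    accordion_s13 l t = 0 ↔ t ∈ l := by
  induction l with
  | nil => exact absurd rfl hne
  | cons a l ih =>
    cases l with
    | nil => simp [accordion_s13, sub_eq_zero]
    | cons b l =>
      have hab : a < b := List.rel_of_pairwise_cons hl List.mem_cons_self
      have htail := hl.of_cons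
      simp only [accordion_s13]
      split_ifs with ht
      · have : t ∉ b :: l := fun h => by linarith [head_le_of_mem_of_pairwise_lt htail h]
        simp [sub_eq_zero, this]
      · have : t ≠ a := by rintro rfl; linarith
        simp [ih htail (List.cons_ne_nil _ _), this]

lemma abs_accordion_sub_accordion (l : List ℝ) {x y : ℝ} (hxy : x ≤ y)
    (h : ∀ m ∈ creases l, m ∉ Set.Icc x y) : |accordion_s13 l x - accordion_s13 l y| = |x - y| := by
  induction l with
  | nil => rfl
  | cons a l ih =>
    cases l with
    | nil => simp [accordion_s13]
    | cons b l =>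
      have hm : (a + b) / 2 ∉ Set.Icc x y := h _ List.mem_cons_self
      simp only [accordion_s13]
      by_cases hy : y ≤ (a + b) / 2
      · rw [if_pos (hxy.trans hy), if_pos hy, sub_sub_sub_cancel_right]
      · have hx : ¬ x ≤ (a + b) / 2 := fun hx => hm ⟨hx, (not_le.1 hy).le⟩
        rw [if_neg hx, if_neg hy, neg_sub_neg, abs_sub_comm]
        exact ih fun m hm => h m (List.mem_cons_of_mem _ hm)

lemma distPreservingOn_accordion {l : List ℝ} {S : Set ℝ}
    (hS : convexHull ℝ S ∩ {m | m ∈ creases l} = ∅) : DistPreservingOn (accordion_s13 l) S := by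
  have key : ∀ x ∈ S, ∀ y ∈ S, x ≤ y → |accordion_s13 l x - accordion_s13 l y| = |x - y| :=
    fun x hx y hy hxy => abs_accordion_sub_accordion l hxy fun m hm hmxy => by
      have : m ∈ convexHull ℝ S := segment_subset_convexHull hx hy (by rwa [segment_eq_Icc hxy])
      exact (Set.eq_empty_iff_forall_notMem.1 hS) m ⟨this, hm⟩
  intro x hx y hy
  rcases le_total x y with hxy | hyx
  · exact key x hx y hy hxy
  · rw [abs_sub_comm, abs_sub_comm x]
    exact key y hy x hx hyx

lemma exists_lt_and_exists_gt_of_mem_creases {l : List ℝ} {m : ℝ} (hl : l.Pairwise (· < ·))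
    (hm : m ∈ creases l) : (∃ a ∈ l, a < m) ∧ ∃ b ∈ l, m < b := by
  induction l with
  | nil => cases hm
  | cons a l ih =>
    cases l with
    | nil => cases hm
    | cons b l =>
      have hab : a < b := List.rel_of_pairwise_cons hl List.mem_cons_self
      rcases List.mem_cons.1 hm with rfl | hm
      · exact ⟨⟨a, List.mem_cons_self, by linarith⟩, b, List.mem_cons_of_mem _ List.mem_cons_self,
          by linarith⟩
      · obtain ⟨⟨a', ha', ha'm⟩, b', hb', hmb'⟩ := ih hl.of_cons hm
        exact ⟨⟨a', List.mem_cons_of_mem _ ha', ha'm⟩, b', List.mem_cons_of_mem _ hb', hmb'⟩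

lemma notMem_of_mem_creases {l : List ℝ} {m : ℝ} (hl : l.Pairwise (· < ·))
    (hm : m ∈ creases l) : m ∉ l := by
  induction l with
  | nil => cases hm
  | cons a l ih =>
    cases l with
    | nil => cases hm
    | cons b l =>
      have hab : a < b := List.rel_of_pairwise_cons hl List.mem_cons_self
      have htail := hl.of_cons
      rcases List.mem_cons.1 hm with rfl | hm
      · intro h
        rcases List.mem_cons.1 h with h | h
        · linarith
        · linarith [head_le_of_mem_of_pairwise_lt htail h]
      · obtain ⟨⟨c, hc, hcm⟩, -⟩ := exists_lt_and_exists_gt_of_mem_creases htail hm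
        intro h
        rcases List.mem_cons.1 h with rfl | h
        · linarith [List.rel_of_pairwise_cons hl hc]
        · exact ih htail hm h

/-- Sufficiency for horizontal-only instances of orthogonal fold & cut: if the
cuts are full horizontal lines of the unit square at the finitely many heights
in `Y ⊆ (0,1)`, the instance is solvable by folding only in the vertical
coordinate (accordion folding at midpoints between consecutive cut heights). -/
theorem horizontal_cuts_solvable
    (Y : Set ℝ) (hYfin : Y.Finite) (hYne : Y.Nonempty)
    (hYsub : Y ⊆ Set.Ioo (0:ℝ) 1) :
    ∃ (v : ℝ → ℝ) (C : Set ℝ) (c : ℝ),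
      Continuous v ∧
      C.Finite ∧ C ⊆ Set.Ioo (0:ℝ) 1 ∧ C ∩ Y = ∅ ∧
      (∀ S : Set ℝ, S ⊆ Set.Icc (0:ℝ) 1 → (convexHull ℝ S) ∩ C = ∅ →
        DistPreservingOn v S) ∧
      {p ∈ Set.Icc (0:ℝ) 1 ×ˢ Set.Icc (0:ℝ) 1 | v p.2 = c}
        = Set.Icc (0:ℝ) 1 ×ˢ Y := by
  set l := hYfin.toFinset.sort (· ≤ ·)
  have hl : l.Pairwise (· < ·) := (Finset.sortedLT_sort _).pairwise
  have hmem : ∀ x, x ∈ l ↔ x ∈ Y := fun x => by simp [l]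
  have hne : l ≠ [] := List.ne_nil_of_mem ((hmem _).2 hYne.some_mem)
  refine ⟨accordion_s13 l, {m | m ∈ creases l}, 0, continuous_accordion hl, (creases l).finite_toSet,
    fun m hm => ?_, ?_, fun S _ hS => distPreservingOn_accordion hS, ?_⟩
  · obtain ⟨⟨a, ha, ham⟩, b, hb, hmb⟩ := exists_lt_and_exists_gt_of_mem_creases hl hm
    exact ⟨(hYsub ((hmem a).1 ha)).1.trans ham, hmb.trans (hYsub ((hmem b).1 hb)).2⟩
  · exact Set.eq_empty_of_forall_notMem fun m ⟨hm, hmY⟩ =>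
      notMem_of_mem_creases hl hm ((hmem m).2 hmY)
  · ext ⟨x, t⟩
    simp only [Set.mem_ofPred_eq, Set.mem_prod, accordion_eq_zero_iff hl hne, hmem]
    exact ⟨fun h => ⟨h.1.1, h.2⟩, fun h => ⟨⟨h.1, Set.Ioo_subset_Icc_self (hYsub h.2)⟩, h.2⟩⟩
end

section
/- Let c ∈ ℝ, δ > 0, y₀ ∈ ℝ, let h : ℝ → ℝ be distance-preserving on [c − δ, c] and on [c, c + δ] and not injective on any neighborhood of c, let v : ℝ → ℝ be arbitrary, and let L ⊆ ℝ × ℝ. If (h (c + t), v (y₀ + t)) ∈ L for all t ∈ [0, δ], then (h (c − t), v (y₀ + t)) ∈ L for all t ∈ [0, δ]. -/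
/-- A distance-preserving map on `[a, b]` is affine (with slope `±1`). -/
lemma distPreservingOn_affine (f : ℝ → ℝ) (a b : ℝ) (hab : a < b)
    (hf : DistPreservingOn f (Set.Icc a b)) :
    ∀ x ∈ Set.Icc a b, (f x - f a) * (b - a) = (x - a) * (f b - f a) := by
  intro x hx
  have ha : a ∈ Set.Icc a b := ⟨le_refl _, hab.le⟩
  have hb : b ∈ Set.Icc a b := ⟨hab.le, le_refl _⟩
  have h1 : |f x - f a| = |x - a| := hf x hx a ha
  have h2 : |f b - f x| = |b - x| := hf b hb x hx
  have h3 : |f b - f a| = |b - a| := hf b hb a ha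
  have s1 : (f x - f a) ^ 2 = (x - a) ^ 2 := by rw [← sq_abs, h1, sq_abs]
  have s2 : (f b - f x) ^ 2 = (b - x) ^ 2 := by rw [← sq_abs, h2, sq_abs]
  have s3 : (f b - f a) ^ 2 = (b - a) ^ 2 := by rw [← sq_abs, h3, sq_abs]
  have p : (f x - f a) * (f b - f a) = (x - a) * (b - a) := by
    linear_combination s1 / 2 - s2 / 2 + s3 / 2
  have hne : b - a ≠ 0 := ne_of_gt (sub_pos.mpr hab)
  have q : (f x - f a) * (b - a) * (b - a) = (x - a) * (f b - f a) * (b - a) := by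
    linear_combination (f b - f a) * p - (f x - f a) * s3
  exact mul_right_cancel₀ hne q

/-- A vertical crease at `x = c` aligns a slope-`1` cut segment through
`(c, y₀)` with its mirror image, the slope-`(−1)` segment through `(c, y₀)`:
if `h` folds at `c` (distance-preserving on both sides, not injective on any
neighborhood of `c`) and `(h (c+t), v (y₀+t)) ∈ L` for all `t ∈ [0,δ]`, then
also `(h (c−t), v (y₀+t)) ∈ L` for all `t ∈ [0,δ]`. -/
theorem crease_reflects_cut
    (c δ y₀ : ℝ) (hδ : 0 < δ)
    (h : ℝ → ℝ)
    (hleft : DistPreservingOn h (Set.Icc (c - δ) c))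
    (hright : DistPreservingOn h (Set.Icc c (c + δ)))
    (hfold : ∀ U ∈ nhds c, ¬ Set.InjOn h U)
    (v : ℝ → ℝ) (L : Set (ℝ × ℝ))
    (hcut : ∀ t ∈ Set.Icc (0:ℝ) δ, (h (c + t), v (y₀ + t)) ∈ L) :
    ∀ t ∈ Set.Icc (0:ℝ) δ, (h (c - t), v (y₀ + t)) ∈ L := by
  have keyR : ∀ s ∈ Set.Icc (0:ℝ) δ,
      (h (c + s) - h c) * δ = s * (h (c + δ) - h c) := by
    intro s hs
    have := distPreservingOn_affine h c (c + δ) (by linarith) hright (c + s)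
      ⟨by linarith [hs.1], by linarith [hs.2]⟩
    linear_combination this
  have keyL : ∀ s ∈ Set.Icc (0:ℝ) δ,
      (h (c - s) - h c) * δ = s * (h (c - δ) - h c) := by
    intro s hs
    have := distPreservingOn_affine h (c - δ) c (by linarith) hleft (c - s)
      ⟨by linarith [hs.2], by linarith [hs.1]⟩
    linear_combination this
  have he : |h (c + δ) - h c| = δ := by
    have := hright (c + δ) ⟨by linarith, le_refl _⟩ c ⟨le_refl _, by linarith⟩
    simpa [abs_of_pos hδ] using this
  have he' : |h (c - δ) - h c| = δ := by
    have := hleft (c - δ) ⟨le_refl _, by linarith⟩ c ⟨by linarith, le_refl _⟩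
    rw [this]
    rw [abs_of_nonpos (by linarith)]; ring
  have habs : |h (c - δ) - h c| = |h (c + δ) - h c| := by rw [he, he']
  rcases abs_eq_abs.mp habs with heq | hneq
  · -- slopes equal: reflection, h (c - t) = h (c + t)
    intro t ht
    have h1 := keyR t ht
    have h2 := keyL t ht
    have hE : h (c - t) = h (c + t) := by
      have hne : δ ≠ 0 := ne_of_gt hδ
      have : (h (c - t) - h c) * δ = (h (c + t) - h c) * δ := by
        rw [h1, h2, heq]
      have := mul_right_cancel₀ hne this
      linarith
    rw [hE]
    exact hcut t ht
  · -- slopes opposite: h injective near c, contradicting hfold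
    exfalso
    apply hfold (Set.Icc (c - δ) (c + δ)) (Icc_mem_nhds (by linarith) (by linarith))
    have claim : ∀ x ∈ Set.Icc (c - δ) (c + δ),
        (h x - h c) * δ = (x - c) * (h (c + δ) - h c) := by
      intro x hx
      rcases le_total c x with hcx | hxc
      · have := keyR (x - c) ⟨by linarith, by linarith [hx.2]⟩
        have hxx : c + (x - c) = x := by ring
        rw [hxx] at this
        linarith [this]
      · have := keyL (c - x) ⟨by linarith, by linarith [hx.1]⟩
        have hxx : c - (c - x) = x := by ring
        rw [hxx] at this
        rw [hneq] at this
        linarith [this]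
    intro x hx y hy hxy
    have hx' := claim x hx
    have hy' := claim y hy
    have hE : (x - c) * (h (c + δ) - h c) = (y - c) * (h (c + δ) - h c) := by
      rw [← hx', ← hy', hxy]
    have hene : h (c + δ) - h c ≠ 0 := by
      intro h0
      rw [h0, abs_zero] at he
      linarith
    have := mul_right_cancel₀ hene hE
    linarith
end

section
/- Let n ≥ 1, let a, b : Fin n → ℝ satisfy 0 ≤ a i < b i for all i, b i < a (i+1) for all i < n−1, and b (n−1) ≤ 1; let K = ⋃ i, [a i, b i]; and let R ⊆ K be finite. Define the canonical crease set C* = R ∪ {(b i + a (i+1)) / 2 : i < n−1}. Suppose there exist a finite set C ⊆ (0,1) with C ∩ K = R and a continuous f : ℝ → ℝ that is distance-preserving on every subset of [0,1] whose open convex hull contains no point of C and is not injective on any neighborhood of any point of C, such that f '' K is a closed interval J and {x ∈ [0,1] : f x ∈ J} = K. Then every continuous f* : ℝ → ℝ that is distance-preserving on every subset of [0,1] whose open convex hull contains no point of C* and is not injective on any neighborhood of any point of C* satisfies: f* '' K is a closed interval J* and {x ∈ [0,1] : f* x ∈ J*} = K. -/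
/-- `f` is a flat folding of `[0,1]` with crease set `C`: it is continuous,
distance-preserving on every subset of `[0,1]` whose open convex hull avoids
`C`, and genuinely folds (is not injective on any neighborhood) at each point
of `C`. -/
def IsFlatFolding (f : ℝ → ℝ) (C : Set ℝ) : Prop :=
  Continuous f ∧
  (∀ S : Set ℝ, S ⊆ Set.Icc (0:ℝ) 1 → interior (convexHull ℝ S) ∩ C = ∅ →
    DistPreservingOn f S) ∧
  (∀ c ∈ C, ∀ U ∈ nhds c, ¬ Set.InjOn f U)

/-- `f` solves 1D interval fold & cut for the union `K` of the cut intervals: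
the image of `K` is a closed interval `J` and the part of `[0,1]` lying on `J`
is exactly `K`. -/
def SolvesIntervalCut (f : ℝ → ℝ) (K : Set ℝ) : Prop :=
  ∃ u w : ℝ, f '' K = Set.Icc u w ∧
    {x ∈ Set.Icc (0:ℝ) 1 | f x ∈ Set.Icc u w} = K

/-- `g` is affine with slope `σ` on `[x,y]`. -/
def IFC.AffOn (g : ℝ → ℝ) (x y σ : ℝ) : Prop :=
  ∀ t ∈ Set.Icc x y, g t = g x + σ * (t - x)

namespace IFC

lemma aff_of_dist {g : ℝ → ℝ} {x y : ℝ} (hxy : x < y)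
    (hd : ∀ s ∈ Set.Icc x y, ∀ t ∈ Set.Icc x y, |g s - g t| = |s - t|) :
    ∃ σ : ℝ, (σ = 1 ∨ σ = -1) ∧ AffOn g x y σ := by
  have hx : x ∈ Set.Icc x y := ⟨le_rfl, hxy.le⟩
  have hy : y ∈ Set.Icc x y := ⟨hxy.le, le_rfl⟩
  have hxy' : |g y - g x| = y - x := by
    rw [hd y hy x hx, abs_of_pos (by linarith)]
  rcases abs_cases (g y - g x) with ⟨h1, _⟩ | ⟨h1, _⟩
  · refine ⟨1, Or.inl rfl, fun t ht => ?_⟩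
    have hA := hd t ht x hx
    have hB := hd y hy t ht
    rw [abs_of_nonneg (by linarith [ht.1] : (0:ℝ) ≤ t - x)] at hA
    rw [abs_of_nonneg (by linarith [ht.2] : (0:ℝ) ≤ y - t)] at hB
    have hA' := abs_le.mp (le_of_eq hA)
    have hB' := abs_le.mp (le_of_eq hB)
    have : g y - g x = y - x := by linarith
    have := hA'.2
    nlinarith [hA'.1, hA'.2, hB'.1, hB'.2]
  · refine ⟨-1, Or.inr rfl, fun t ht => ?_⟩
    have hA := hd t ht x hx
    have hB := hd y hy t ht
    rw [abs_of_nonneg (by linarith [ht.1] : (0:ℝ) ≤ t - x)] at hA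
    rw [abs_of_nonneg (by linarith [ht.2] : (0:ℝ) ≤ y - t)] at hB
    have hA' := abs_le.mp (le_of_eq hA)
    have hB' := abs_le.mp (le_of_eq hB)
    have : g y - g x = -(y - x) := by linarith
    nlinarith [hA'.1, hA'.2, hB'.1, hB'.2]

lemma AffOn.restrict {g : ℝ → ℝ} {x y σ c : ℝ} (h : AffOn g x y σ)
    (hc : c ∈ Set.Icc x y) : AffOn g c y σ := by
  intro t ht
  have ht' : t ∈ Set.Icc x y := ⟨le_trans hc.1 ht.1, ht.2⟩
  rw [h t ht', h c hc]; ring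

lemma AffOn.restrict_left {g : ℝ → ℝ} {x y σ c : ℝ} (h : AffOn g x y σ)
    (hc : c ∈ Set.Icc x y) : AffOn g x c σ := by
  intro t ht
  exact h t ⟨ht.1, le_trans ht.2 hc.2⟩

lemma slope_eq2 {g1 g2 : ℝ → ℝ} {x y σ1 σ2 : ℝ} (h1 : AffOn g1 x y σ1)
    (h2 : AffOn g2 x y σ2) (hxy : x < y) (hx : g1 x = g2 x) (hy : g1 y = g2 y) :
    σ1 = σ2 := by
  have e1 := h1 y ⟨hxy.le, le_rfl⟩
  have e2 := h2 y ⟨hxy.le, le_rfl⟩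
  have : σ1 * (y - x) = σ2 * (y - x) := by linarith
  have hne : y - x ≠ 0 := by linarith
  exact mul_right_cancel₀ hne this

lemma slope_eq {g : ℝ → ℝ} {x y σ1 σ2 : ℝ} (h1 : AffOn g x y σ1)
    (h2 : AffOn g x y σ2) (hxy : x < y) : σ1 = σ2 :=
  slope_eq2 h1 h2 hxy rfl rfl

lemma eqOn_of_aff {g1 g2 : ℝ → ℝ} {x y σ : ℝ} (h1 : AffOn g1 x y σ)
    (h2 : AffOn g2 x y σ) (hx : g1 x = g2 x) :
    Set.EqOn g1 g2 (Set.Icc x y) := by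
  intro t ht
  rw [h1 t ht, h2 t ht, hx]

lemma AffOn.glue {g : ℝ → ℝ} {x c y σ : ℝ} (h1 : AffOn g x c σ)
    (h2 : AffOn g c y σ) (hxc : x ≤ c) (hcy : c ≤ y) : AffOn g x y σ := by
  intro t ht
  rcases le_total t c with h | h
  · exact h1 t ⟨ht.1, h⟩
  · rw [h2 t ⟨h, ht.2⟩, h1 c ⟨hxc, le_rfl⟩]; ring

lemma fold_flip {g : ℝ → ℝ} {x c y σ1 σ2 : ℝ} (h1 : AffOn g x c σ1)
    (h2 : AffOn g c y σ2) (hxc : x < c) (hcy : c < y)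
    (hs1 : σ1 = 1 ∨ σ1 = -1) (hs2 : σ2 = 1 ∨ σ2 = -1)
    (hfold : ∀ U ∈ nhds c, ¬ Set.InjOn g U) : σ2 = -σ1 := by
  by_contra hne
  have heq : σ2 = σ1 := by rcases hs1 with h | h <;> rcases hs2 with h' | h' <;>
    simp [h, h'] at hne ⊢ <;> simp [h, h'] at hne ⊢
  subst heq
  have haff : AffOn g x y σ2 := h1.glue h2 hxc.le hcy.le
  refine hfold (Set.Icc x y) (Icc_mem_nhds hxc hcy) ?_
  intro s hs t ht hst
  have es := haff s hs
  have et := haff t ht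
  have hσ : σ2 ≠ 0 := by rcases hs1 with h | h <;> simp [h]
  have : σ2 * (s - x) = σ2 * (t - x) := by linarith
  have := mul_left_cancel₀ hσ this
  linarith

lemma pick_right {D : Set ℝ} (hD : D.Finite) {x y : ℝ} (hxy : x < y) :
    ∃ z, x < z ∧ z ≤ y ∧ Set.Ioo x z ∩ D = ∅ := by
  have hT : (D ∩ Set.Ioo x y).Finite := hD.inter_of_left _
  by_cases hne : (hT.toFinset).Nonempty
  · set z := hT.toFinset.min' hne with hz
    have hzmem : z ∈ D ∩ Set.Ioo x y := by
      have := hT.toFinset.min'_mem hne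
      rwa [Set.Finite.mem_toFinset] at this
    refine ⟨z, hzmem.2.1, hzmem.2.2.le, ?_⟩
    ext d; simp only [Set.mem_inter_iff, Set.mem_Ioo, Set.mem_empty_iff_false, iff_false]
    rintro ⟨⟨hd1, hd2⟩, hdD⟩
    have hdT : d ∈ hT.toFinset := by
      rw [Set.Finite.mem_toFinset]
      exact ⟨hdD, hd1, lt_of_lt_of_le hd2 hzmem.2.2.le⟩
    have := hT.toFinset.min'_le d hdT
    rw [← hz] at this; linarith
  · refine ⟨y, hxy, le_rfl, ?_⟩
    ext d; simp only [Set.mem_inter_iff, Set.mem_empty_iff_false, iff_false]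
    rintro ⟨hd1, hd2⟩
    refine hne ⟨d, ?_⟩
    rw [Set.Finite.mem_toFinset]
    exact ⟨hd2, hd1⟩

lemma pick_left {D : Set ℝ} (hD : D.Finite) {x y : ℝ} (hxy : x < y) :
    ∃ z, x ≤ z ∧ z < y ∧ Set.Ioo z y ∩ D = ∅ := by
  have hT : (D ∩ Set.Ioo x y).Finite := hD.inter_of_left _
  by_cases hne : (hT.toFinset).Nonempty
  · set z := hT.toFinset.max' hne with hz
    have hzmem : z ∈ D ∩ Set.Ioo x y := by
      have := hT.toFinset.max'_mem hne
      rwa [Set.Finite.mem_toFinset] at this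
    refine ⟨z, hzmem.2.1.le, hzmem.2.2, ?_⟩
    ext d; simp only [Set.mem_inter_iff, Set.mem_Ioo, Set.mem_empty_iff_false, iff_false]
    rintro ⟨⟨hd1, hd2⟩, hdD⟩
    have hdT : d ∈ hT.toFinset := by
      rw [Set.Finite.mem_toFinset]
      exact ⟨hdD, lt_of_le_of_lt hzmem.2.1.le hd1, hd2⟩
    have := hT.toFinset.le_max' d hdT
    rw [← hz] at this; linarith
  · refine ⟨x, le_rfl, hxy, ?_⟩
    ext d; simp only [Set.mem_inter_iff, Set.mem_empty_iff_false, iff_false]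
    rintro ⟨hd1, hd2⟩
    refine hne ⟨d, ?_⟩
    rw [Set.Finite.mem_toFinset]
    exact ⟨hd2, hd1⟩

end IFC

namespace IFC

lemma ifc_eqOn {h1 h2 : ℝ → ℝ} (hc1 : Continuous h1) (hc2 : Continuous h2)
    {D : Set ℝ} (hD : D.Finite) {p q p₀ : ℝ} (hpp0 : p < p₀) (hp0q : p₀ ≤ q)
    (iso1 : ∀ x y : ℝ, p ≤ x → x < y → y ≤ q → Set.Ioo x y ∩ D = ∅ →
      ∃ σ, (σ = 1 ∨ σ = -1) ∧ AffOn h1 x y σ)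
    (iso2 : ∀ x y : ℝ, p ≤ x → x < y → y ≤ q → Set.Ioo x y ∩ D = ∅ →
      ∃ σ, (σ = 1 ∨ σ = -1) ∧ AffOn h2 x y σ)
    (fold1 : ∀ c ∈ D, p < c → c < q → ∀ U ∈ nhds c, ¬ Set.InjOn h1 U)
    (fold2 : ∀ c ∈ D, p < c → c < q → ∀ U ∈ nhds c, ¬ Set.InjOn h2 U)
    (base : Set.EqOn h1 h2 (Set.Icc p p₀)) : Set.EqOn h1 h2 (Set.Icc p q) := by
  set E : Set ℝ := {x | x ∈ Set.Icc p₀ q ∧ Set.EqOn h1 h2 (Set.Icc p x)} with hE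
  have hp0E : p₀ ∈ E := ⟨⟨le_rfl, hp0q⟩, base⟩
  have hEne : E.Nonempty := ⟨p₀, hp0E⟩
  have hEbdd : BddAbove E := ⟨q, fun x hx => hx.1.2⟩
  have hep0 : p₀ ≤ sSup E := le_csSup hEbdd hp0E
  have heq : sSup E ≤ q := csSup_le hEne (fun x hx => hx.1.2)
  have hpe : p < sSup E := lt_of_lt_of_le hpp0 hep0
  -- sSup E ∈ E
  have heE : Set.EqOn h1 h2 (Set.Icc p (sSup E)) := by
    have hIco : ∀ s ∈ Set.Ico p (sSup E), h1 s = h2 s := by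
      intro s hs
      obtain ⟨x, hxE, hsx⟩ := exists_lt_of_lt_csSup hEne hs.2
      exact hxE.2 ⟨hs.1, hsx.le⟩
    intro t ht
    rcases lt_or_eq_of_le ht.2 with hlt | hteq
    · exact hIco t ⟨ht.1, hlt⟩
    · have hclosed : IsClosed {x | h1 x = h2 x} := isClosed_eq hc1 hc2
      have hmem : sSup E ∈ closure (Set.Ico p (sSup E)) := by
        rw [closure_Ico (ne_of_lt hpe)]
        exact ⟨hpe.le, le_rfl⟩
      have := hclosed.closure_subset (closure_mono hIco hmem)
      rw [hteq]
      exact this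
  -- sSup E = q
  rcases eq_or_lt_of_le heq with heqq | hlt
  · rw [← heqq]; exact heE
  · exfalso
    obtain ⟨q', hq'1, hq'2, hq'3⟩ := pick_right hD hlt
    by_cases heD : sSup E ∈ D
    · -- fold at sSup E for both
      obtain ⟨p', hp'1, hp'2, hp'3⟩ := pick_left hD hpe
      obtain ⟨σ1, hσ1, haff1⟩ := iso1 p' (sSup E) hp'1 hp'2 heq hp'3
      obtain ⟨σ2, hσ2, haff2⟩ := iso2 p' (sSup E) hp'1 hp'2 heq hp'3
      obtain ⟨σ1', hσ1', haff1'⟩ := iso1 (sSup E) q' hpe.le hq'1 hq'2 hq'3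
      obtain ⟨σ2', hσ2', haff2'⟩ := iso2 (sSup E) q' hpe.le hq'1 hq'2 hq'3
      have hσeq : σ1 = σ2 := slope_eq2 haff1 haff2 hp'2
        (heE ⟨hp'1, hp'2.le⟩) (heE ⟨hpe.le, le_rfl⟩)
      have hf1 : σ1' = -σ1 := fold_flip haff1 haff1' hp'2 hq'1 hσ1 hσ1'
        (fold1 (sSup E) heD hpe hlt)
      have hf2 : σ2' = -σ2 := fold_flip haff2 haff2' hp'2 hq'1 hσ2 hσ2'
        (fold2 (sSup E) heD hpe hlt)
      have heqon : Set.EqOn h1 h2 (Set.Icc (sSup E) q') := by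
        refine eqOn_of_aff haff1' ?_ (heE ⟨hpe.le, le_rfl⟩)
        rw [hf1, hσeq, ← hf2]; exact haff2'
      have hq'E : q' ∈ E := by
        refine ⟨⟨le_trans hep0 hq'1.le, hq'2⟩, fun t ht => ?_⟩
        rcases le_total t (sSup E) with h | h
        · exact heE ⟨ht.1, h⟩
        · exact heqon ⟨h, ht.2⟩
      have hle : q' ≤ sSup E := le_csSup hEbdd hq'E
      linarith
    · -- no crease at sSup E
      obtain ⟨p', hp'1, hp'2, hp'3⟩ := pick_left hD hpe
      have hno : Set.Ioo p' q' ∩ D = ∅ := by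
        ext d; simp only [Set.mem_inter_iff, Set.mem_Ioo, Set.mem_empty_iff_false, iff_false]
        rintro ⟨⟨hd1, hd2⟩, hdD⟩
        rcases lt_trichotomy d (sSup E) with h | h | h
        · have hmem : d ∈ Set.Ioo p' (sSup E) ∩ D := ⟨⟨hd1, h⟩, hdD⟩
          rw [hp'3] at hmem; exact hmem
        · exact heD (h ▸ hdD)
        · have hmem : d ∈ Set.Ioo (sSup E) q' ∩ D := ⟨⟨h, hd2⟩, hdD⟩
          rw [hq'3] at hmem; exact hmem
      obtain ⟨σ1, hσ1, haff1⟩ := iso1 p' q' hp'1 (lt_trans hp'2 hq'1) hq'2 hno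
      obtain ⟨σ2, hσ2, haff2⟩ := iso2 p' q' hp'1 (lt_trans hp'2 hq'1) hq'2 hno
      have hσeq : σ1 = σ2 := slope_eq2 (haff1.restrict_left ⟨hp'2.le, hq'1.le⟩)
        (haff2.restrict_left ⟨hp'2.le, hq'1.le⟩) hp'2
        (heE ⟨hp'1, hp'2.le⟩) (heE ⟨hpe.le, le_rfl⟩)
      have heqon : Set.EqOn h1 h2 (Set.Icc p' q') :=
        eqOn_of_aff haff1 (hσeq ▸ haff2) (heE ⟨hp'1, hp'2.le⟩)
      have hq'E : q' ∈ E := by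
        refine ⟨⟨le_trans hep0 hq'1.le, hq'2⟩, fun t ht => ?_⟩
        rcases le_total t (sSup E) with h | h
        · exact heE ⟨ht.1, h⟩
        · exact heqon ⟨le_trans hp'2.le h, ht.2⟩
      have hle : q' ≤ sSup E := le_csSup hEbdd hq'E
      linarith


lemma sideKey {f : ℝ → ℝ} (hf : Continuous f) {α β u' w' : ℝ} (hαβ : α < β)
    (huw' : u' ≤ w') (himg' : ∀ x ∈ Set.Ioo α β, f x ∉ Set.Icc u' w')
    (hlow : f ((α + β)/2) < u') : ∀ x ∈ Set.Ioo α β, f x < u' := by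
  have hx0 : (α + β) / 2 ∈ Set.Ioo α β := ⟨by linarith, by linarith⟩
  intro x hx
  by_contra hge
  push_neg at hge
  have hfx : w' < f x := by
    have := himg' x hx
    rw [Set.mem_Icc, not_and_or, not_le, not_le] at this
    rcases this with h | h
    · linarith
    · exact h
  have hsub : Set.uIcc ((α + β)/2) x ⊆ Set.Ioo α β := by
    intro c hc
    rw [Set.mem_uIcc] at hc
    rcases hc with ⟨h1, h2⟩ | ⟨h1, h2⟩
    · exact ⟨lt_of_lt_of_le hx0.1 h1, lt_of_le_of_lt h2 hx.2⟩
    · exact ⟨lt_of_lt_of_le hx.1 h1, lt_of_le_of_lt h2 hx0.2⟩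
  have hmem : u' ∈ Set.uIcc (f ((α + β)/2)) (f x) := by
    rw [Set.mem_uIcc]
    left; exact ⟨hlow.le, by linarith⟩
  obtain ⟨c, hc, hfc⟩ := intermediate_value_uIcc hf.continuousOn hmem
  exact himg' c (hsub hc) (by rw [hfc]; exact ⟨le_rfl, huw'⟩)

lemma sideAux {f : ℝ → ℝ} (hf : Continuous f) {α β v : ℝ} (hαβ : α < β)
    (hv : ∀ x ∈ Set.Ioo α β, f x < v) : f α ≤ v ∧ f β ≤ v := by
  have hsub : f '' Set.Ioo α β ⊆ Set.Iio v := by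
    rintro y ⟨x, hx, rfl⟩; exact hv x hx
  have hcl : f '' closure (Set.Ioo α β) ⊆ closure (f '' Set.Ioo α β) :=
    image_closure_subset_closure_image hf
  have hcl2 : closure (f '' Set.Ioo α β) ⊆ Set.Iic v := by
    calc closure (f '' Set.Ioo α β) ⊆ closure (Set.Iio v) := closure_mono hsub
      _ = Set.Iic v := closure_Iio v
  rw [closure_Ioo (ne_of_lt hαβ)] at hcl
  constructor
  · exact Set.mem_Iic.mp (hcl2 (hcl ⟨α, ⟨le_rfl, hαβ.le⟩, rfl⟩))
  · exact Set.mem_Iic.mp (hcl2 (hcl ⟨β, ⟨hαβ.le, le_rfl⟩, rfl⟩))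

lemma side {f : ℝ → ℝ} (hf : Continuous f) {u w α β : ℝ} (hαβ : α < β)
    (himg : ∀ x ∈ Set.Ioo α β, f x ∉ Set.Icc u w) (hβ : f β ∈ Set.Icc u w) :
    ∃ s : ℝ, (s = 1 ∨ s = -1) ∧ (∀ x ∈ Set.Ioo α β, s * (f x - f β) > 0) ∧
      (s = 1 → f β = w) ∧ (s = -1 → f β = u) ∧
      (f α ∈ Set.Icc u w → f α = f β) := by
  have huw : u ≤ w := le_trans hβ.1 hβ.2
  have hx0 : (α + β) / 2 ∈ Set.Ioo α β := ⟨by linarith, by linarith⟩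
  have hx0' := himg _ hx0
  rw [Set.mem_Icc, not_and_or, not_le, not_le] at hx0'
  rcases hx0' with hlow | hhigh
  · have hall := sideKey hf hαβ huw himg hlow
    have haux := sideAux hf hαβ hall
    have hβu : f β = u := le_antisymm haux.2 hβ.1
    refine ⟨-1, Or.inr rfl, ?_, ?_, fun _ => hβu, ?_⟩
    · intro x hx
      have := hall x hx
      rw [hβu]; nlinarith
    · intro h; norm_num at h
    · intro hα
      rw [hβu]; linarith [hα.1, haux.1]
  · set g : ℝ → ℝ := fun x => -(f x) with hg
    have hgc : Continuous g := hf.neg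
    have hgim : ∀ x ∈ Set.Ioo α β, g x ∉ Set.Icc (-w) (-u) := by
      intro x hx hmem
      have h1 := hmem.1
      have h2 := hmem.2
      simp only [hg] at h1 h2
      exact himg x hx ⟨by linarith, by linarith⟩
    have hglow : g ((α + β)/2) < -w := by simp [hg]; linarith
    have hall := sideKey hgc hαβ (by linarith : -w ≤ -u) hgim hglow
    have haux := sideAux hgc hαβ hall
    have hβw : f β = w := by
      have := haux.2
      simp only [hg] at this
      exact le_antisymm hβ.2 (by linarith)
    refine ⟨1, Or.inl rfl, ?_, fun _ => hβw, ?_, ?_⟩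
    · intro x hx
      have := hall x hx
      simp only [hg] at this
      rw [hβw]; nlinarith
    · intro h; norm_num at h
    · intro hα
      have := haux.1
      simp only [hg] at this
      rw [hβw]; linarith [hα.2]

lemma isoOf {g : ℝ → ℝ} {Cg : Set ℝ} (hg : IsFlatFolding g Cg) {x y : ℝ}
    (hxy : x < y) (h01 : Set.Icc x y ⊆ Set.Icc 0 1)
    (hC : Set.Ioo x y ∩ Cg = ∅) :
    ∃ σ : ℝ, (σ = 1 ∨ σ = -1) ∧ AffOn g x y σ := by
  refine aff_of_dist hxy ?_
  have hint : interior (convexHull ℝ (Set.Icc x y)) ∩ Cg = ∅ := by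
    rw [(convex_Icc x y).convexHull_eq, interior_Icc]; exact hC
  have := hg.2.1 (Set.Icc x y) h01 hint
  exact fun s hs t ht => this s hs t ht

lemma cross {g : ℝ → ℝ} {Cg : Set ℝ} (hg : IsFlatFolding g Cg)
    {zL x zR σL σR : ℝ} (h1 : zL < x) (h2 : x < zR)
    (h01 : Set.Icc zL zR ⊆ Set.Icc 0 1) (hC : Set.Ioo zL zR ∩ Cg ⊆ {x})
    (affL : AffOn g zL x σL) (affR : AffOn g x zR σR)
    (sL : σL = 1 ∨ σL = -1) (sR : σR = 1 ∨ σR = -1) :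
    (x ∈ Cg → σR = -σL) ∧ (x ∉ Cg → σR = σL) := by
  constructor
  · intro hx
    exact fold_flip affL affR h1 h2 sL sR (hg.2.2 x hx)
  · intro hx
    have hC' : Set.Ioo zL zR ∩ Cg = ∅ := by
      ext d; simp only [Set.mem_inter_iff, Set.mem_empty_iff_false, iff_false]
      rintro ⟨hd1, hd2⟩
      have := hC ⟨hd1, hd2⟩
      rw [Set.mem_singleton_iff] at this
      exact hx (this ▸ hd2)
    obtain ⟨σ, hσ, haff⟩ := isoOf hg (lt_trans h1 h2) h01 hC'
    have e1 : σL = σ := slope_eq affL (haff.restrict_left ⟨h1.le, h2.le⟩) h1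
    have e2 : σR = σ := slope_eq affR (haff.restrict ⟨h1.le, h2.le⟩) h2
    rw [e1, e2]

lemma side2 {f : ℝ → ℝ} (hf : Continuous f) {u w α β : ℝ} (hαβ : α < β)
    (himg : ∀ x ∈ Set.Ioo α β, f x ∉ Set.Icc u w) (hα : f α ∈ Set.Icc u w) :
    ∃ s : ℝ, (s = 1 ∨ s = -1) ∧ (∀ x ∈ Set.Ioo α β, s * (f x - f α) > 0) ∧
      (s = 1 → f α = w) ∧ (s = -1 → f α = u) := by
  set g : ℝ → ℝ := fun x => f (α + β - x) with hg
  have hgc : Continuous g := hf.comp (continuous_const.sub continuous_id)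
  have hmemg : ∀ x ∈ Set.Ioo α β, α + β - x ∈ Set.Ioo α β := by
    intro x hx; exact ⟨by linarith [hx.2], by linarith [hx.1]⟩
  have hgim : ∀ x ∈ Set.Ioo α β, g x ∉ Set.Icc u w := by
    intro x hx; exact himg _ (hmemg x hx)
  have hgβ : g β ∈ Set.Icc u w := by
    have : α + β - β = α := by ring
    simp only [hg, this]; exact hα
  obtain ⟨s, hs, hsgn, h1, h2, _⟩ := side hgc hαβ hgim hgβ
  have hgβ' : g β = f α := by simp [hg]
  refine ⟨s, hs, ?_, fun h => hgβ' ▸ h1 h, fun h => hgβ' ▸ h2 h⟩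
  intro x hx
  have := hsgn (α + β - x) (hmemg x hx)
  have hgx : g (α + β - x) = f x := by simp [hg]
  rw [hgx, hgβ'] at this
  exact this

lemma flatFolding_affine {f : ℝ → ℝ} {C : Set ℝ} {σ τ : ℝ} (hσ : σ = 1 ∨ σ = -1)
    (hf : IsFlatFolding f C) : IsFlatFolding (fun x => σ * f x + τ) C := by
  have habs : |σ| = 1 := by rcases hσ with h | h <;> simp [h]
  refine ⟨(continuous_const.mul hf.1).add continuous_const, ?_, ?_⟩
  · intro S hS hint x hx y hy
    have := hf.2.1 S hS hint x hx y hy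
    calc |σ * f x + τ - (σ * f y + τ)| = |σ * (f x - f y)| := by ring_nf
      _ = |σ| * |f x - f y| := abs_mul _ _
      _ = |x - y| := by rw [habs, one_mul, this]
  · intro c hc U hU hinj
    refine hf.2.2 c hc U hU ?_
    intro x hx y hy hxy
    refine hinj hx hy ?_
    simp only [hxy]

lemma solves_affine {g : ℝ → ℝ} {K : Set ℝ} {σ τ : ℝ} (hσ : σ = 1 ∨ σ = -1)
    (hs : SolvesIntervalCut g K) : SolvesIntervalCut (fun x => σ * g x + τ) K := by
  obtain ⟨u, w, himg, hset⟩ := hs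
  have hmemiff : ∀ x, g x ∈ Set.Icc u w ↔
      σ * g x + τ ∈ Set.Icc (if σ = 1 then u + τ else τ - w) (if σ = 1 then w + τ else τ - u) := by
    intro x
    rcases hσ with h | h <;> subst h <;> simp only [if_pos, if_neg, Set.mem_Icc] <;> norm_num <;>
      constructor <;> intro hh <;> constructor <;> linarith [hh.1, hh.2]
  refine ⟨if σ = 1 then u + τ else τ - w, if σ = 1 then w + τ else τ - u, ?_, ?_⟩
  · ext y
    constructor
    · rintro ⟨x, hx, rfl⟩
      have hgx : g x ∈ Set.Icc u w := himg ▸ ⟨x, hx, rfl⟩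
      exact (hmemiff x).mp hgx
    · intro hy
      have hy' : (if σ = 1 then y - τ else τ - y) ∈ Set.Icc u w := by
        rcases hσ with h | h <;> subst h <;>
          rw [Set.mem_Icc] at hy ⊢ <;> norm_num at hy ⊢ <;>
          exact ⟨by linarith [hy.1, hy.2], by linarith [hy.1, hy.2]⟩
      rw [← himg] at hy'
      obtain ⟨x, hx, hgx⟩ := hy'
      refine ⟨x, hx, ?_⟩
      show σ * g x + τ = y
      rcases hσ with h | h <;> subst h <;> rw [hgx]
      · norm_num
      · norm_num
  · rw [← hset]
    ext x
    simp only [Set.mem_setOf_eq]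
    constructor
    · rintro ⟨h01, hmem⟩
      exact ⟨h01, (hmemiff x).mpr hmem⟩
    · rintro ⟨h01, hmem⟩
      exact ⟨h01, (hmemiff x).mp hmem⟩

lemma same_sign {s σ d : ℝ} (hs : s = 1 ∨ s = -1) (hσ : σ = 1 ∨ σ = -1)
    (hd : 0 < d) (h : 0 < s * (σ * d)) : σ = s := by
  rcases hs with rfl | rfl <;> rcases hσ with rfl | rfl <;> first | rfl | nlinarith

end IFC

/-- Characterization of 1D interval fold & cut: given pairwise disjoint cut
intervals `[a i, b i] ⊆ [0,1]` with union `K` and a finite set `R ⊆ K` of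
required creases, if any flat folding whose crease set meets `K` exactly in `R`
solves the instance, then every flat folding of the canonical crease set
(`R` together with the midpoint between each pair of consecutive cut intervals)
also solves it. -/
theorem interval_fold_and_cut_canonical
    (n : ℕ) (hn : 1 ≤ n) (a b : Fin n → ℝ)
    (ha0 : ∀ i, 0 ≤ a i) (hab : ∀ i, a i < b i)
    (hsep : ∀ i : Fin n, ∀ h : i.val + 1 < n, b i < a ⟨i.val + 1, h⟩)
    (hlast : b ⟨n - 1, by omega⟩ ≤ 1)
    (K : Set ℝ) (hK : K = ⋃ i, Set.Icc (a i) (b i))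
    (R : Set ℝ) (hRsub : R ⊆ K) (hRfin : R.Finite)
    (Cstar : Set ℝ)
    (hCstar : Cstar = R ∪
      {m : ℝ | ∃ i : Fin n, ∃ h : i.val + 1 < n,
        m = (b i + a ⟨i.val + 1, h⟩) / 2})
    (hsolvable : ∃ C : Set ℝ, C.Finite ∧ C ⊆ Set.Ioo (0:ℝ) 1 ∧ C ∩ K = R ∧
      ∃ f : ℝ → ℝ, IsFlatFolding f C ∧ SolvesIntervalCut f K) :
    ∀ fstar : ℝ → ℝ, IsFlatFolding fstar Cstar →
      SolvesIntervalCut fstar K := by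
  classical
  intro fstar hfstar
  obtain ⟨C, hCfin, hCsub, hCK, f, hf, hsol⟩ := hsolvable
  obtain ⟨u, w, hfimg, hfset⟩ := hsol
  set A : ℕ → ℝ := fun k => if h : k < n then a ⟨k, h⟩ else 0 with hA
  set B : ℕ → ℝ := fun k => if h : k < n then b ⟨k, h⟩ else 0 with hB
  have hAdef : ∀ k (hk : k < n), A k = a ⟨k, hk⟩ := fun k hk => dif_pos hk
  have hBdef : ∀ k (hk : k < n), B k = b ⟨k, hk⟩ := fun k hk => dif_pos hk
  have hAB : ∀ k, k < n → A k < B k := by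
    intro k hk; rw [hAdef k hk, hBdef k hk]; exact hab _
  have hA0 : ∀ k, k < n → 0 ≤ A k := by
    intro k hk; rw [hAdef k hk]; exact ha0 _
  have hstep : ∀ k, k + 1 < n → B k < A (k+1) := by
    intro k hk1
    have hk : k < n := by omega
    have := hsep ⟨k, hk⟩ hk1
    rw [hBdef k hk, hAdef (k+1) hk1]
    exact this
  have horder : ∀ j k, k < n → j < k → B j < A k := by
    intro j k
    induction k with
    | zero => omega
    | succ p ih =>
      intro hk hjk
      rcases Nat.lt_succ_iff_lt_or_eq.mp hjk with h | h
      · have hp : p < n := by omega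
        have h1 := ih hp h
        have h2 := hAB p hp
        have h3 := hstep p hk
        linarith
      · subst h; exact hstep j hk
  have hAmono : ∀ j k, k < n → j ≤ k → A j ≤ A k := by
    intro j k hk hjk
    rcases Nat.lt_or_ge j k with h | h
    · have h1 := horder j k hk h
      have h2 := hAB j (by omega)
      linarith
    · have : j = k := by omega
      subst this; rfl
  have hBmono : ∀ j k, k < n → j ≤ k → B j ≤ B k := by
    intro j k hk hjk
    rcases Nat.lt_or_ge j k with h | h
    · have h1 := horder j k hk h
      have h2 := hAB k hk
      linarith
    · have : j = k := by omega
      subst this; rfl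
  have hBlast : B (n-1) ≤ 1 := by
    rw [hBdef (n-1) (by omega)]; exact hlast
  have hB1 : ∀ k, k < n → B k ≤ 1 := by
    intro k hk
    exact le_trans (hBmono k (n-1) (by omega) (by omega)) hBlast
  have hKiff : ∀ x, x ∈ K ↔ ∃ k, ∃ hk : k < n, A k ≤ x ∧ x ≤ B k := by
    intro x
    rw [hK, Set.mem_iUnion]
    constructor
    · rintro ⟨i, hi⟩
      refine ⟨i.val, i.isLt, ?_, ?_⟩
      · rw [hAdef i.val i.isLt]; exact hi.1
      · rw [hBdef i.val i.isLt]; exact hi.2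
    · rintro ⟨k, hk, h1, h2⟩
      rw [hAdef k hk] at h1; rw [hBdef k hk] at h2
      exact ⟨⟨k, hk⟩, h1, h2⟩
  have hK01 : K ⊆ Set.Icc (0:ℝ) 1 := by
    intro x hx
    obtain ⟨k, hk, h1, h2⟩ := (hKiff x).mp hx
    exact ⟨le_trans (hA0 k hk) h1, le_trans h2 (hB1 k hk)⟩
  have hCstar' : Cstar = R ∪
      {m : ℝ | ∃ k : ℕ, ∃ hk : k + 1 < n, m = (B k + A (k+1)) / 2} := by
    rw [hCstar]
    congr 1
    ext m
    simp only [Set.mem_setOf_eq]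
    constructor
    · rintro ⟨i, hi, rfl⟩
      exact ⟨i.val, hi, by rw [hBdef i.val i.isLt, hAdef (i.val+1) hi]⟩
    · rintro ⟨k, hk, rfl⟩
      exact ⟨⟨k, by omega⟩, hk, by rw [hBdef k (by omega), hAdef (k+1) hk]⟩
  have hMidfin : {m : ℝ | ∃ k : ℕ, ∃ hk : k + 1 < n, m = (B k + A (k+1)) / 2}.Finite := by
    apply Set.Finite.subset ((Set.finite_Iio n).image (fun k => (B k + A (k+1)) / 2))
    rintro m ⟨k, hk, rfl⟩
    exact ⟨k, by simpa using (by omega : k < n), rfl⟩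
  have hCstarfin : Cstar.Finite := by
    rw [hCstar']; exact hRfin.union hMidfin
  have hCCfin : (C ∪ Cstar).Finite := hCfin.union hCstarfin
  have hRC : R ⊆ C := by
    rw [← hCK]; exact Set.inter_subset_left
  have hRCstar : R ⊆ Cstar := by
    rw [hCstar']; exact Set.subset_union_left
  have hKC : ∀ x ∈ K, (x ∈ C ↔ x ∈ R) := by
    intro x hx
    constructor
    · intro hc; rw [← hCK]; exact ⟨hc, hx⟩
    · intro hr; exact hRC hr
  have hGapK : ∀ k, k + 1 < n → ∀ x ∈ Set.Ioo (B k) (A (k+1)), x ∉ K := by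
    intro k hk1 x hx hxK
    obtain ⟨j, hj, h1, h2⟩ := (hKiff x).mp hxK
    rcases Nat.lt_or_ge k j with h | h
    · have : A (k+1) ≤ A j := hAmono (k+1) j hj (by omega)
      linarith [hx.2]
    · have : B j ≤ B k := hBmono j k (by omega) h
      linarith [hx.1]
  have hKCstar : ∀ x ∈ K, (x ∈ Cstar ↔ x ∈ R) := by
    intro x hx
    constructor
    · intro hc
      rw [hCstar'] at hc
      rcases hc with h | h
      · exact h
      · obtain ⟨k, hk, rfl⟩ := h
        have h1 := hstep k hk
        exact absurd hx (hGapK k hk _ ⟨by linarith, by linarith⟩)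
    · intro hr; exact hRCstar hr
  have hmidmem : ∀ k, k + 1 < n → (B k + A (k+1)) / 2 ∈ Cstar := by
    intro k hk
    rw [hCstar']
    exact Or.inr ⟨k, hk, rfl⟩
  have hGapCstar : ∀ k, k + 1 < n → ∀ d ∈ Set.Ioo (B k) (A (k+1)),
      d ∈ Cstar → d = (B k + A (k+1)) / 2 := by
    intro k hk1 d hd hdC
    rw [hCstar'] at hdC
    rcases hdC with h | h
    · exact absurd (hRsub h) (hGapK k hk1 d hd)
    · obtain ⟨j, hj, rfl⟩ := h
      have hsj := hstep j hj
      rcases Nat.lt_or_ge j k with h | h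
      · have : A (j+1) ≤ B k := le_trans (hAmono (j+1) k (by omega) (by omega)) (hAB k (by omega)).le
        have := hd.1
        linarith
      · rcases Nat.lt_or_ge k j with h' | h'
        · have : B j ≥ A (k+1) := le_trans (hAmono (k+1) j (by omega) (by omega)) (hAB j (by omega)).le
          have := hd.2
          linarith
        · have : j = k := by omega
          subst this; rfl
  have hIntCstar : ∀ k, k < n → ∀ x y : ℝ, A k ≤ x → y ≤ B k →
      Set.Ioo x y ∩ (R ∩ Set.Ioo (A k) (B k)) = ∅ → Set.Ioo x y ∩ Cstar = ∅ := by
    intro k hk x y hx hy hemp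
    rw [Set.eq_empty_iff_forall_notMem] at hemp ⊢
    intro d hd
    have hdI : d ∈ Set.Ioo (A k) (B k) :=
      ⟨lt_of_le_of_lt hx hd.1.1, lt_of_lt_of_le hd.1.2 hy⟩
    have hdK : d ∈ K := (hKiff d).mpr ⟨k, hk, hdI.1.le, hdI.2.le⟩
    have hdR : d ∈ R := (hKCstar d hdK).mp hd.2
    exact hemp d ⟨hd.1, hdR, hdI⟩
  have hIntC : ∀ k, k < n → ∀ x y : ℝ, A k ≤ x → y ≤ B k →
      Set.Ioo x y ∩ (R ∩ Set.Ioo (A k) (B k)) = ∅ → Set.Ioo x y ∩ C = ∅ := by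
    intro k hk x y hx hy hemp
    rw [Set.eq_empty_iff_forall_notMem] at hemp ⊢
    intro d hd
    have hdI : d ∈ Set.Ioo (A k) (B k) :=
      ⟨lt_of_le_of_lt hx hd.1.1, lt_of_lt_of_le hd.1.2 hy⟩
    have hdK : d ∈ K := (hKiff d).mpr ⟨k, hk, hdI.1.le, hdI.2.le⟩
    have hdR : d ∈ R := (hKC d hdK).mp hd.2
    exact hemp d ⟨hd.1, hdR, hdI⟩
  have interSplit : ∀ x y : ℝ, Set.Ioo x y ∩ (C ∪ Cstar) = ∅ →
      Set.Ioo x y ∩ C = ∅ ∧ Set.Ioo x y ∩ Cstar = ∅ := by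
    intro x y hxy
    rw [Set.eq_empty_iff_forall_notMem] at hxy
    constructor <;> rw [Set.eq_empty_iff_forall_notMem] <;> intro d hd
    · exact hxy d ⟨hd.1, Or.inl hd.2⟩
    · exact hxy d ⟨hd.1, Or.inr hd.2⟩
  -- normalization
  have hn0 : 0 < n := hn
  obtain ⟨z0, hz01, hz02, hz03⟩ := IFC.pick_right hCCfin (hAB 0 hn0)
  obtain ⟨hz0C, hz0S⟩ := interSplit _ _ hz03
  have hIccA0 : Set.Icc (A 0) z0 ⊆ Set.Icc (0:ℝ) 1 := by
    intro t ht
    exact ⟨le_trans (hA0 0 hn0) ht.1, le_trans ht.2 (le_trans hz02 (hB1 0 hn0))⟩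
  obtain ⟨σf, hσf, hafff⟩ := IFC.isoOf hf hz01 hIccA0 hz0C
  obtain ⟨σs, hσs, haffs⟩ := IFC.isoOf hfstar hz01 hIccA0 hz0S
  set σ0 : ℝ := σf * σs with hσ0def
  set τ0 : ℝ := f (A 0) - σ0 * fstar (A 0) with hτ0def
  have hσ0 : σ0 = 1 ∨ σ0 = -1 := by
    rcases hσf with h | h <;> rcases hσs with h' | h' <;> rw [hσ0def, h, h'] <;> norm_num
  set h : ℝ → ℝ := fun x => σ0 * fstar x + τ0 with hdef
  have hh : IsFlatFolding h Cstar := IFC.flatFolding_affine hσ0 hfstar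
  have hhA0 : h (A 0) = f (A 0) := by
    rw [hdef]; simp only [hτ0def]; ring
  have haffh : IFC.AffOn h (A 0) z0 σf := by
    intro t ht
    have hst := haffs t ht
    have hkey : σ0 * σs = σf := by
      rcases hσf with hh1 | hh1 <;> rcases hσs with hh2 | hh2 <;>
        rw [hσ0def, hh1, hh2] <;> norm_num
    show σ0 * fstar t + τ0 = σ0 * fstar (A 0) + τ0 + σf * (t - A 0)
    rw [hst, ← hkey]; ring
  have hbase : Set.EqOn h f (Set.Icc (A 0) z0) := IFC.eqOn_of_aff haffh hafff hhA0
  -- interval propagation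
  have intervalEq : ∀ k, ∀ hk : k < n, ∀ z : ℝ, A k < z → z ≤ B k →
      Set.EqOn h f (Set.Icc (A k) z) → Set.EqOn h f (Set.Icc (A k) (B k)) := by
    intro k hk z hz1 hz2 hbase'
    have hIcc01 : ∀ x y : ℝ, A k ≤ x → y ≤ B k → Set.Icc x y ⊆ Set.Icc (0:ℝ) 1 := by
      intro x y hx hy t ht
      exact ⟨le_trans (le_trans (hA0 k hk) hx) ht.1, le_trans ht.2 (le_trans hy (hB1 k hk))⟩
    refine IFC.ifc_eqOn (D := R ∩ Set.Ioo (A k) (B k)) hh.1 hf.1 (hRfin.inter_of_left _) hz1 hz2 ?_ ?_ ?_ ?_ hbase'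
    · intro x y hx hxy hy hD
      exact IFC.isoOf hh hxy (hIcc01 x y hx hy) (hIntCstar k hk x y hx hy hD)
    · intro x y hx hxy hy hD
      exact IFC.isoOf hf hxy (hIcc01 x y hx hy) (hIntC k hk x y hx hy hD)
    · intro c hc _ _
      exact hh.2.2 c (hRCstar hc.1)
    · intro c hc _ _
      exact hf.2.2 c (hRC hc.1)
  -- slope sign helpers
  have slopeOut : ∀ (g : ℝ → ℝ) (α zR β s σ : ℝ), α < zR → zR ≤ β →
      (∀ x ∈ Set.Ioo α β, s * (g x - g α) > 0) → IFC.AffOn g α zR σ →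
      (s = 1 ∨ s = -1) → (σ = 1 ∨ σ = -1) → σ = s := by
    intro g α zR β s σ h1 h2 hsgn haff hs hσ
    have ht : (α + zR)/2 ∈ Set.Icc α zR := ⟨by linarith, by linarith⟩
    have ht2 : (α + zR)/2 ∈ Set.Ioo α β := ⟨by linarith, by linarith⟩
    have hgt := hsgn _ ht2
    rw [haff _ ht] at hgt
    rw [show g α + σ * ((α + zR)/2 - α) - g α = σ * ((α + zR)/2 - α) by ring] at hgt
    exact IFC.same_sign hs hσ (by linarith : (0:ℝ) < (α + zR)/2 - α) hgt
  have slopeIn : ∀ (g : ℝ → ℝ) (α zL β s σ : ℝ), zL < β → α ≤ zL →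
      (∀ x ∈ Set.Ioo α β, s * (g x - g β) > 0) → IFC.AffOn g zL β σ →
      (s = 1 ∨ s = -1) → (σ = 1 ∨ σ = -1) → σ = -s := by
    intro g α zL β s σ h1 h2 hsgn haff hs hσ
    have ht : (zL + β)/2 ∈ Set.Icc zL β := ⟨by linarith, by linarith⟩
    have ht2 : (zL + β)/2 ∈ Set.Ioo α β := ⟨by linarith, by linarith⟩
    have hgt := hsgn _ ht2
    rw [haff _ ht, haff β ⟨h1.le, le_rfl⟩] at hgt
    rw [show g zL + σ * ((zL + β)/2 - zL) - (g zL + σ * (β - zL)) =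
      (-σ) * (β - (zL + β)/2) by ring] at hgt
    have hneg : -σ = 1 ∨ -σ = -1 := by
      rcases hσ with h | h <;> rw [h] <;> norm_num
    have := IFC.same_sign hs hneg (by linarith : (0:ℝ) < β - (zL + β)/2) hgt
    linarith
  -- gap step
  have gapStep : ∀ k, ∀ hk1 : k + 1 < n, Set.EqOn h f (Set.Icc (A k) (B k)) →
      Set.EqOn h f (Set.Icc (A (k+1)) (B (k+1))) ∧
      ∀ x ∈ Set.Ioo (B k) (A (k+1)), h x ∉ Set.Icc u w := by
    intro k hk1 IH
    have hk : k < n := by omega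
    have hαβ : B k < A (k+1) := hstep k hk1
    have hα0 : (0:ℝ) ≤ B k := le_trans (hA0 k hk) (hAB k hk).le
    have hβ1 : A (k+1) ≤ 1 := le_trans (hAB (k+1) hk1).le (hB1 (k+1) hk1)
    have himgGap : ∀ x ∈ Set.Ioo (B k) (A (k+1)), f x ∉ Set.Icc u w := by
      intro x hx hmem
      have hx01 : x ∈ Set.Icc (0:ℝ) 1 := ⟨le_trans hα0 hx.1.le, le_trans hx.2.le hβ1⟩
      have hxK : x ∈ K := by rw [← hfset]; exact ⟨hx01, hmem⟩
      exact hGapK k hk1 x hx hxK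
    have hβK : A (k+1) ∈ K := (hKiff _).mpr ⟨k+1, hk1, le_rfl, (hAB (k+1) hk1).le⟩
    have hαK : B k ∈ K := (hKiff _).mpr ⟨k, hk, (hAB k hk).le, le_rfl⟩
    have hfβJ : f (A (k+1)) ∈ Set.Icc u w := hfimg ▸ ⟨_, hβK, rfl⟩
    have hfαJ : f (B k) ∈ Set.Icc u w := hfimg ▸ ⟨_, hαK, rfl⟩
    obtain ⟨s, hs, hsgn, hs1, hs2, hfeq'⟩ := IFC.side hf.1 hαβ himgGap hfβJ
    have hfαβ : f (B k) = f (A (k+1)) := hfeq' hfαJ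
    have hsgn' : ∀ x ∈ Set.Ioo (B k) (A (k+1)), s * (f x - f (B k)) > 0 := by
      intro x hx; rw [hfαβ]; exact hsgn x hx
    obtain ⟨zR, hzR1, hzR2, hzR3⟩ := IFC.pick_right hCCfin hαβ
    obtain ⟨hzRC, hzRS⟩ := interSplit _ _ hzR3
    obtain ⟨σfR, hσfR, hafffR⟩ := IFC.isoOf hf hzR1
      (fun t ht => ⟨le_trans hα0 ht.1, le_trans ht.2 (le_trans hzR2 hβ1)⟩) hzRC
    have hσfRs : σfR = s :=
      slopeOut f (B k) zR (A (k+1)) s σfR hzR1 hzR2 hsgn' hafffR hs hσfR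
    obtain ⟨zL', hzL'1, hzL'2, hzL'3⟩ := IFC.pick_left hCCfin hαβ
    obtain ⟨hzL'C, hzL'S⟩ := interSplit _ _ hzL'3
    obtain ⟨σfL2, hσfL2, hafffL2⟩ := IFC.isoOf hf hzL'2
      (fun t ht => ⟨le_trans hα0 (le_trans hzL'1 ht.1), le_trans ht.2 hβ1⟩) hzL'C
    have hσfL2s : σfL2 = -s :=
      slopeIn f (B k) zL' (A (k+1)) s σfL2 hzL'2 hzL'1 hsgn hafffL2 hs hσfL2
    obtain ⟨zLt, hzLt1, hzLt2, hzLt3⟩ := IFC.pick_left hCCfin (hAB k hk)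
    obtain ⟨hzLtC, hzLtS⟩ := interSplit _ _ hzLt3
    have hIccL : Set.Icc zLt (B k) ⊆ Set.Icc (0:ℝ) 1 := fun t ht =>
      ⟨le_trans (le_trans (hA0 k hk) hzLt1) ht.1, le_trans ht.2 (hB1 k hk)⟩
    obtain ⟨σfLm, hσfLm, hafffLm⟩ := IFC.isoOf hf hzLt2 hIccL hzLtC
    obtain ⟨σhLm, hσhLm, haffhLm⟩ := IFC.isoOf hh hzLt2 hIccL hzLtS
    have hLeq : σhLm = σfLm := IFC.slope_eq2 haffhLm hafffLm hzLt2
      (IH ⟨hzLt1, hzLt2.le⟩) (IH ⟨(hAB k hk).le, le_rfl⟩)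
    have hm1 : B k < (B k + A (k+1))/2 := by linarith
    have hm2 : (B k + A (k+1))/2 < A (k+1) := by linarith
    have hGL : Set.Ioo (B k) ((B k + A (k+1))/2) ∩ Cstar = ∅ := by
      rw [Set.eq_empty_iff_forall_notMem]
      rintro d ⟨hd1, hd2⟩
      have := hGapCstar k hk1 d ⟨hd1.1, lt_trans hd1.2 hm2⟩ hd2
      rw [this] at hd1
      exact absurd hd1.2 (lt_irrefl _)
    have hGR : Set.Ioo ((B k + A (k+1))/2) (A (k+1)) ∩ Cstar = ∅ := by
      rw [Set.eq_empty_iff_forall_notMem]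
      rintro d ⟨hd1, hd2⟩
      have := hGapCstar k hk1 d ⟨lt_trans hm1 hd1.1, hd1.2⟩ hd2
      rw [this] at hd1
      exact absurd hd1.1 (lt_irrefl _)
    obtain ⟨σhm, hσhm, haffhm⟩ := IFC.isoOf hh hm1
      (fun t ht => ⟨le_trans hα0 ht.1, le_trans ht.2 (le_trans hm2.le hβ1)⟩) hGL
    obtain ⟨σhm2, hσhm2, haffhm2⟩ := IFC.isoOf hh hm2
      (fun t ht => ⟨le_trans (le_trans hα0 hm1.le) ht.1, le_trans ht.2 hβ1⟩) hGR
    have hsubf : Set.Ioo zLt zR ∩ C ⊆ {B k} := by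
      rintro d ⟨hd1, hd2⟩
      rcases lt_trichotomy d (B k) with hlt | heq | hgt
      · have : d ∈ Set.Ioo zLt (B k) ∩ C := ⟨⟨hd1.1, hlt⟩, hd2⟩
        rw [hzLtC] at this; exact this.elim
      · exact Set.mem_singleton_iff.mpr heq
      · have : d ∈ Set.Ioo (B k) zR ∩ C := ⟨⟨hgt, hd1.2⟩, hd2⟩
        rw [hzRC] at this; exact this.elim
    have hsubh : Set.Ioo zLt ((B k + A (k+1))/2) ∩ Cstar ⊆ {B k} := by
      rintro d ⟨hd1, hd2⟩
      rcases lt_trichotomy d (B k) with hlt | heq | hgt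
      · have : d ∈ Set.Ioo zLt (B k) ∩ Cstar := ⟨⟨hd1.1, hlt⟩, hd2⟩
        rw [hzLtS] at this; exact this.elim
      · exact Set.mem_singleton_iff.mpr heq
      · have : d ∈ Set.Ioo (B k) ((B k + A (k+1))/2) ∩ Cstar := ⟨⟨hgt, hd1.2⟩, hd2⟩
        rw [hGL] at this; exact this.elim
    have hcf := IFC.cross hf hzLt2 hzR1
      (fun t ht => ⟨le_trans (le_trans (hA0 k hk) hzLt1) ht.1,
        le_trans ht.2 (le_trans hzR2 hβ1)⟩) hsubf hafffLm hafffR hσfLm hσfR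
    have hch := IFC.cross hh hzLt2 hm1
      (fun t ht => ⟨le_trans (le_trans (hA0 k hk) hzLt1) ht.1,
        le_trans ht.2 (le_trans hm2.le hβ1)⟩) hsubh haffhLm haffhm hσhLm hσhm
    have hσhms : σhm = s := by
      by_cases hbR : B k ∈ R
      · have e1 := hcf.1 (hRC hbR)
        have e2 := hch.1 (hRCstar hbR)
        rw [e2, hLeq, ← e1]; exact hσfRs
      · have hbC : B k ∉ C := fun hc => hbR ((hKC _ hαK).mp hc)
        have hbS : B k ∉ Cstar := fun hc => hbR ((hKCstar _ hαK).mp hc)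
        have e1 := hcf.2 hbC
        have e2 := hch.2 hbS
        rw [e2, hLeq, ← e1]; exact hσfRs
    have hflip : σhm2 = -σhm := IFC.fold_flip haffhm haffhm2 hm1 hm2 hσhm hσhm2
      (hh.2.2 _ (hmidmem k hk1))
    have em := haffhm ((B k + A (k+1))/2) ⟨hm1.le, le_rfl⟩
    have eβ := haffhm2 (A (k+1)) ⟨hm2.le, le_rfl⟩
    have ehα : h (B k) = f (B k) := IH ⟨(hAB k hk).le, le_rfl⟩
    have hhβ : h (A (k+1)) = f (A (k+1)) := by
      rw [eβ, em, hflip, hσhms, ehα, hfαβ]; ring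
    have gapOut : ∀ x ∈ Set.Ioo (B k) (A (k+1)), h x ∉ Set.Icc u w := by
      intro x hx hmem
      rcases le_or_gt x ((B k + A (k+1))/2) with hle | hgt
      · have ex := haffhm x ⟨hx.1.le, hle⟩
        rw [hσhms, ehα, hfαβ] at ex
        rcases hs with hs' | hs'
        · have hww := hs1 hs'
          have hc := hmem.2
          rw [ex, hww, hs'] at hc
          linarith [hx.1]
        · have huu := hs2 hs'
          have hc := hmem.1
          rw [ex, huu, hs'] at hc
          linarith [hx.1]
      · have ex := haffhm2 x ⟨hgt.le, hx.2.le⟩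
        rw [em, hflip, hσhms, ehα, hfαβ] at ex
        rcases hs with hs' | hs'
        · have hww := hs1 hs'
          have hc := hmem.2
          rw [ex, hww, hs'] at hc
          linarith [hx.2]
        · have huu := hs2 hs'
          have hc := hmem.1
          rw [ex, huu, hs'] at hc
          linarith [hx.2]
    obtain ⟨zR2, hzR21, hzR22, hzR23⟩ := IFC.pick_right hCCfin (hAB (k+1) hk1)
    obtain ⟨hzR2C, hzR2S⟩ := interSplit _ _ hzR23
    have hIccβ : Set.Icc (A (k+1)) zR2 ⊆ Set.Icc (0:ℝ) 1 := fun t ht =>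
      ⟨le_trans (le_trans hα0 hαβ.le) ht.1, le_trans ht.2 (le_trans hzR22 (hB1 (k+1) hk1))⟩
    obtain ⟨σfR2, hσfR2, hafffR2⟩ := IFC.isoOf hf hzR21 hIccβ hzR2C
    obtain ⟨σhR2, hσhR2, haffhR2⟩ := IFC.isoOf hh hzR21 hIccβ hzR2S
    have hsubf2 : Set.Ioo zL' zR2 ∩ C ⊆ {A (k+1)} := by
      rintro d ⟨hd1, hd2⟩
      rcases lt_trichotomy d (A (k+1)) with hlt | heq | hgt
      · have : d ∈ Set.Ioo zL' (A (k+1)) ∩ C := ⟨⟨hd1.1, hlt⟩, hd2⟩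
        rw [hzL'C] at this; exact this.elim
      · exact Set.mem_singleton_iff.mpr heq
      · have : d ∈ Set.Ioo (A (k+1)) zR2 ∩ C := ⟨⟨hgt, hd1.2⟩, hd2⟩
        rw [hzR2C] at this; exact this.elim
    have hsubh2 : Set.Ioo ((B k + A (k+1))/2) zR2 ∩ Cstar ⊆ {A (k+1)} := by
      rintro d ⟨hd1, hd2⟩
      rcases lt_trichotomy d (A (k+1)) with hlt | heq | hgt
      · have : d ∈ Set.Ioo ((B k + A (k+1))/2) (A (k+1)) ∩ Cstar := ⟨⟨hd1.1, hlt⟩, hd2⟩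
        rw [hGR] at this; exact this.elim
      · exact Set.mem_singleton_iff.mpr heq
      · have : d ∈ Set.Ioo (A (k+1)) zR2 ∩ Cstar := ⟨⟨hgt, hd1.2⟩, hd2⟩
        rw [hzR2S] at this; exact this.elim
    have hcf2 := IFC.cross hf hzL'2 hzR21
      (fun t ht => ⟨le_trans (le_trans hα0 hzL'1) ht.1,
        le_trans ht.2 (le_trans hzR22 (hB1 (k+1) hk1))⟩) hsubf2 hafffL2 hafffR2 hσfL2 hσfR2
    have hch2 := IFC.cross hh hm2 hzR21
      (fun t ht => ⟨le_trans (le_trans hα0 hm1.le) ht.1,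
        le_trans ht.2 (le_trans hzR22 (hB1 (k+1) hk1))⟩) hsubh2 haffhm2 haffhR2 hσhm2 hσhR2
    have hσR2eq : σhR2 = σfR2 := by
      by_cases hbR : A (k+1) ∈ R
      · have e1 := hcf2.1 (hRC hbR)
        have e2 := hch2.1 (hRCstar hbR)
        rw [e2, hflip, hσhms, e1, hσfL2s]
      · have hbC : A (k+1) ∉ C := fun hc => hbR ((hKC _ hβK).mp hc)
        have hbS : A (k+1) ∉ Cstar := fun hc => hbR ((hKCstar _ hβK).mp hc)
        rw [hch2.2 hbS, hcf2.2 hbC, hflip, hσhms, hσfL2s]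
    have hafff2' : IFC.AffOn f (A (k+1)) zR2 σhR2 := by
      rw [hσR2eq]; exact hafffR2
    have hbase2 : Set.EqOn h f (Set.Icc (A (k+1)) zR2) :=
      IFC.eqOn_of_aff haffhR2 hafff2' hhβ
    exact ⟨intervalEq (k+1) hk1 zR2 hzR21 hzR22 hbase2, gapOut⟩
  -- main induction over intervals
  have main : ∀ k, k < n → Set.EqOn h f (Set.Icc (A k) (B k)) ∧
      (∀ j, j + 1 ≤ k → ∀ x ∈ Set.Ioo (B j) (A (j+1)), h x ∉ Set.Icc u w) := by
    intro k
    induction k with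
    | zero =>
      intro hk
      refine ⟨intervalEq 0 hk z0 hz01 hz02 hbase, ?_⟩
      intro j hj; omega
    | succ p ih =>
      intro hk
      have hp : p < n := by omega
      obtain ⟨ihEq, ihGap⟩ := ih hp
      obtain ⟨nextEq, gapOut⟩ := gapStep p hk ihEq
      refine ⟨nextEq, ?_⟩
      intro j hj x hx
      rcases Nat.lt_or_ge (j+1) (p+1) with hlt | hge
      · exact ihGap j (by omega) x hx
      · have hjp : j = p := by omega
        subst hjp; exact gapOut x hx
  -- left tail
  have ltail : ∀ x, 0 ≤ x → x < A 0 → h x ∉ Set.Icc u w := by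
    intro x hx0 hxA hmem
    have hA0pos : 0 < A 0 := lt_of_le_of_lt hx0 hxA
    have himgT : ∀ y ∈ Set.Ioo 0 (A 0), f y ∉ Set.Icc u w := by
      intro y hy hmemy
      have hy01 : y ∈ Set.Icc (0:ℝ) 1 :=
        ⟨hy.1.le, le_trans hy.2.le (le_trans (hAB 0 hn0).le (hB1 0 hn0))⟩
      have hyK : y ∈ K := by rw [← hfset]; exact ⟨hy01, hmemy⟩
      obtain ⟨j, hj, h1, h2⟩ := (hKiff y).mp hyK
      have : A 0 ≤ A j := hAmono 0 j hj (by omega)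
      linarith [hy.2]
    have hA0K : A 0 ∈ K := (hKiff _).mpr ⟨0, hn0, le_rfl, (hAB 0 hn0).le⟩
    have hfA0J : f (A 0) ∈ Set.Icc u w := hfimg ▸ ⟨_, hA0K, rfl⟩
    obtain ⟨s, hs, hsgn, hs1, hs2, _⟩ := IFC.side hf.1 hA0pos himgT hfA0J
    obtain ⟨zLt, hzLt1, hzLt2, hzLt3⟩ := IFC.pick_left hCCfin hA0pos
    obtain ⟨hzLtC, hzLtS⟩ := interSplit _ _ hzLt3
    have hIccL : Set.Icc zLt (A 0) ⊆ Set.Icc (0:ℝ) 1 := fun t ht =>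
      ⟨le_trans hzLt1 ht.1, le_trans ht.2 (le_trans (hAB 0 hn0).le (hB1 0 hn0))⟩
    obtain ⟨σfLt, hσfLt, hafffLt⟩ := IFC.isoOf hf hzLt2 hIccL hzLtC
    have hσfLts : σfLt = -s :=
      slopeIn f 0 zLt (A 0) s σfLt hzLt2 hzLt1 hsgn hafffLt hs hσfLt
    -- slope of h on [0, A 0]
    have hT : Set.Ioo (0:ℝ) (A 0) ∩ Cstar = ∅ := by
      rw [Set.eq_empty_iff_forall_notMem]
      rintro d ⟨hd1, hd2⟩
      rw [hCstar'] at hd2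
      rcases hd2 with hdr | hdm
      · obtain ⟨j, hj, h1, h2⟩ := (hKiff d).mp (hRsub hdr)
        have : A 0 ≤ A j := hAmono 0 j hj (by omega)
        linarith [hd1.2]
      · obtain ⟨j, hj, rfl⟩ := hdm
        have h1 := hstep j hj
        have h2 : B 0 ≤ B j := hBmono 0 j (by omega) (by omega)
        have h3 := hAB 0 hn0
        have h4 := hd1.2
        linarith
    have hIccT : Set.Icc (0:ℝ) (A 0) ⊆ Set.Icc (0:ℝ) 1 := fun t ht =>
      ⟨ht.1, le_trans ht.2 (le_trans (hAB 0 hn0).le (hB1 0 hn0))⟩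
    obtain ⟨σh0, hσh0, haffh0⟩ := IFC.isoOf hh hA0pos hIccT hT
    -- cross at A 0
    have hsubf : Set.Ioo zLt z0 ∩ C ⊆ {A 0} := by
      rintro d ⟨hd1, hd2⟩
      rcases lt_trichotomy d (A 0) with hlt | heq | hgt
      · have : d ∈ Set.Ioo zLt (A 0) ∩ C := ⟨⟨hd1.1, hlt⟩, hd2⟩
        rw [hzLtC] at this; exact this.elim
      · exact Set.mem_singleton_iff.mpr heq
      · have : d ∈ Set.Ioo (A 0) z0 ∩ C := ⟨⟨hgt, hd1.2⟩, hd2⟩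
        rw [hz0C] at this; exact this.elim
    have hsubh : Set.Ioo 0 z0 ∩ Cstar ⊆ {A 0} := by
      rintro d ⟨hd1, hd2⟩
      rcases lt_trichotomy d (A 0) with hlt | heq | hgt
      · have : d ∈ Set.Ioo 0 (A 0) ∩ Cstar := ⟨⟨hd1.1, hlt⟩, hd2⟩
        rw [hT] at this; exact this.elim
      · exact Set.mem_singleton_iff.mpr heq
      · have : d ∈ Set.Ioo (A 0) z0 ∩ Cstar := ⟨⟨hgt, hd1.2⟩, hd2⟩
        rw [hz0S] at this; exact this.elim
    have hcf := IFC.cross hf hzLt2 hz01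
      (fun t ht => ⟨le_trans hzLt1 ht.1, le_trans ht.2 (le_trans hz02 (hB1 0 hn0))⟩)
      hsubf hafffLt hafff hσfLt hσf
    have hch := IFC.cross hh hA0pos hz01
      (fun t ht => ⟨ht.1, le_trans ht.2 (le_trans hz02 (hB1 0 hn0))⟩)
      hsubh haffh0 haffh hσh0 hσf
    have hσh0s : σh0 = -s := by
      by_cases hbR : A 0 ∈ R
      · have e1 := hcf.1 (hRC hbR)
        have e2 := hch.1 (hRCstar hbR)
        -- e1 : σf = -σfLt, e2 : σf = -σh0
        have : -σh0 = -σfLt := by rw [← e1, ← e2]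
        have : σh0 = σfLt := by linarith
        rw [this, hσfLts]
      · have hbC : A 0 ∉ C := fun hc => hbR ((hKC _ hA0K).mp hc)
        have hbS : A 0 ∉ Cstar := fun hc => hbR ((hKCstar _ hA0K).mp hc)
        have e1 := hcf.2 hbC
        have e2 := hch.2 hbS
        rw [← e2, e1, hσfLts]
    have eA := haffh0 (A 0) ⟨hA0pos.le, le_rfl⟩
    have ex := haffh0 x ⟨hx0, hxA.le⟩
    have ehA : h (A 0) = f (A 0) := (main 0 hn0).1 ⟨le_rfl, (hAB 0 hn0).le⟩
    -- h x = h 0 + σh0 * x ; h (A 0) = h 0 + σh0 * A 0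
    rcases hs with hs' | hs'
    · have hww := hs1 hs'
      have hc := hmem.2
      rw [hσh0s, hs'] at eA ex
      have : h x = f (A 0) + (x - A 0) * (-1) := by
        rw [← ehA] at *; rw [eA] at *; rw [ex]; ring
      rw [this, hww] at hc
      linarith
    · have huu := hs2 hs'
      have hc := hmem.1
      rw [hσh0s, hs'] at eA ex
      have : h x = f (A 0) + (x - A 0) * 1 := by
        rw [← ehA] at *; rw [eA] at *; rw [ex]; ring
      rw [this, huu] at hc
      linarith
  -- right tail
  have rtail : ∀ x, B (n-1) < x → x ≤ 1 → h x ∉ Set.Icc u w := by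
    intro x hxB hx1 hmem
    have hn1 : n - 1 < n := by omega
    have hB1lt : B (n-1) < 1 := lt_of_lt_of_le hxB hx1
    have hBn0 : (0:ℝ) ≤ B (n-1) := le_trans (hA0 _ hn1) (hAB _ hn1).le
    have himgT : ∀ y ∈ Set.Ioo (B (n-1)) 1, f y ∉ Set.Icc u w := by
      intro y hy hmemy
      have hy01 : y ∈ Set.Icc (0:ℝ) 1 := ⟨le_trans hBn0 hy.1.le, hy.2.le⟩
      have hyK : y ∈ K := by rw [← hfset]; exact ⟨hy01, hmemy⟩
      obtain ⟨j, hj, h1, h2⟩ := (hKiff y).mp hyK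
      have : B j ≤ B (n-1) := hBmono j (n-1) (by omega) (by omega)
      linarith [hy.1]
    have hBK : B (n-1) ∈ K := (hKiff _).mpr ⟨n-1, hn1, (hAB _ hn1).le, le_rfl⟩
    have hfBJ : f (B (n-1)) ∈ Set.Icc u w := hfimg ▸ ⟨_, hBK, rfl⟩
    obtain ⟨s, hs, hsgn, hs1, hs2⟩ := IFC.side2 hf.1 hB1lt himgT hfBJ
    obtain ⟨zRt, hzRt1, hzRt2, hzRt3⟩ := IFC.pick_right hCCfin hB1lt
    obtain ⟨hzRtC, hzRtS⟩ := interSplit _ _ hzRt3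
    have hIccR : Set.Icc (B (n-1)) zRt ⊆ Set.Icc (0:ℝ) 1 := fun t ht =>
      ⟨le_trans hBn0 ht.1, le_trans ht.2 hzRt2⟩
    obtain ⟨σfRt, hσfRt, hafffRt⟩ := IFC.isoOf hf hzRt1 hIccR hzRtC
    have hσfRts : σfRt = s :=
      slopeOut f (B (n-1)) zRt 1 s σfRt hzRt1 hzRt2 hsgn hafffRt hs hσfRt
    -- left slopes at B (n-1)
    obtain ⟨zLn, hzLn1, hzLn2, hzLn3⟩ := IFC.pick_left hCCfin (hAB (n-1) hn1)
    obtain ⟨hzLnC, hzLnS⟩ := interSplit _ _ hzLn3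
    have hIccL : Set.Icc zLn (B (n-1)) ⊆ Set.Icc (0:ℝ) 1 := fun t ht =>
      ⟨le_trans (le_trans (hA0 _ hn1) hzLn1) ht.1, le_trans ht.2 (hB1 _ hn1)⟩
    obtain ⟨σfLn, hσfLn, hafffLn⟩ := IFC.isoOf hf hzLn2 hIccL hzLnC
    obtain ⟨σhLn, hσhLn, haffhLn⟩ := IFC.isoOf hh hzLn2 hIccL hzLnS
    have hmainN := (main (n-1) hn1).1
    have hLeq : σhLn = σfLn := IFC.slope_eq2 haffhLn hafffLn hzLn2
      (hmainN ⟨hzLn1, hzLn2.le⟩) (hmainN ⟨(hAB _ hn1).le, le_rfl⟩)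
    -- slope of h on [B (n-1), 1]
    have hT : Set.Ioo (B (n-1)) 1 ∩ Cstar = ∅ := by
      rw [Set.eq_empty_iff_forall_notMem]
      rintro d ⟨hd1, hd2⟩
      rw [hCstar'] at hd2
      rcases hd2 with hdr | hdm
      · obtain ⟨j, hj, h1, h2⟩ := (hKiff d).mp (hRsub hdr)
        have : B j ≤ B (n-1) := hBmono j (n-1) (by omega) (by omega)
        linarith [hd1.1]
      · obtain ⟨j, hj, rfl⟩ := hdm
        have h1 := hstep j hj
        have h2 : A (j+1) ≤ B (n-1) :=
          le_trans (hAmono (j+1) (n-1) (by omega) (by omega)) (hAB _ hn1).le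
        have h4 := hd1.1
        linarith
    obtain ⟨σh1, hσh1, haffh1⟩ := IFC.isoOf hh hB1lt
      (fun t ht => ⟨le_trans hBn0 ht.1, ht.2⟩) hT
    -- cross at B (n-1)
    have hsubf : Set.Ioo zLn zRt ∩ C ⊆ {B (n-1)} := by
      rintro d ⟨hd1, hd2⟩
      rcases lt_trichotomy d (B (n-1)) with hlt | heq | hgt
      · have : d ∈ Set.Ioo zLn (B (n-1)) ∩ C := ⟨⟨hd1.1, hlt⟩, hd2⟩
        rw [hzLnC] at this; exact this.elim
      · exact Set.mem_singleton_iff.mpr heq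
      · have : d ∈ Set.Ioo (B (n-1)) zRt ∩ C := ⟨⟨hgt, hd1.2⟩, hd2⟩
        rw [hzRtC] at this; exact this.elim
    have hsubh : Set.Ioo zLn 1 ∩ Cstar ⊆ {B (n-1)} := by
      rintro d ⟨hd1, hd2⟩
      rcases lt_trichotomy d (B (n-1)) with hlt | heq | hgt
      · have : d ∈ Set.Ioo zLn (B (n-1)) ∩ Cstar := ⟨⟨hd1.1, hlt⟩, hd2⟩
        rw [hzLnS] at this; exact this.elim
      · exact Set.mem_singleton_iff.mpr heq
      · have : d ∈ Set.Ioo (B (n-1)) 1 ∩ Cstar := ⟨⟨hgt, hd1.2⟩, hd2⟩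
        rw [hT] at this; exact this.elim
    have hcf := IFC.cross hf hzLn2 hzRt1
      (fun t ht => ⟨le_trans (le_trans (hA0 _ hn1) hzLn1) ht.1, le_trans ht.2 hzRt2⟩)
      hsubf hafffLn hafffRt hσfLn hσfRt
    have hch := IFC.cross hh hzLn2 hB1lt
      (fun t ht => ⟨le_trans (le_trans (hA0 _ hn1) hzLn1) ht.1, ht.2⟩)
      hsubh haffhLn haffh1 hσhLn hσh1
    have hσh1s : σh1 = s := by
      by_cases hbR : B (n-1) ∈ R
      · have e1 := hcf.1 (hRC hbR)
        have e2 := hch.1 (hRCstar hbR)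
        rw [e2, hLeq, ← e1]; exact hσfRts
      · have hbC : B (n-1) ∉ C := fun hc => hbR ((hKC _ hBK).mp hc)
        have hbS : B (n-1) ∉ Cstar := fun hc => hbR ((hKCstar _ hBK).mp hc)
        rw [hch.2 hbS, hLeq, ← hcf.2 hbC]; exact hσfRts
    have ex := haffh1 x ⟨hxB.le, hx1⟩
    have ehB : h (B (n-1)) = f (B (n-1)) := hmainN ⟨(hAB _ hn1).le, le_rfl⟩
    rw [hσh1s, ehB] at ex
    rcases hs with hs' | hs'
    · have hww := hs1 hs'
      have hc := hmem.2
      rw [ex, hww, hs'] at hc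
      linarith
    · have huu := hs2 hs'
      have hc := hmem.1
      rw [ex, huu, hs'] at hc
      linarith
  -- assembly
  have hEqK : Set.EqOn h f K := by
    intro x hx
    obtain ⟨k, hk, h1, h2⟩ := (hKiff x).mp hx
    exact (main k hk).1 ⟨h1, h2⟩
  have hhimg : h '' K = Set.Icc u w := by
    rw [Set.image_congr hEqK, hfimg]
  have hhset : {x | x ∈ Set.Icc (0:ℝ) 1 ∧ h x ∈ Set.Icc u w} = K := by
    ext x
    constructor
    · rintro ⟨h01, hmem⟩
      by_contra hxK
      rcases lt_or_ge x (A 0) with hlt | hge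
      · exact ltail x h01.1 hlt hmem
      rcases lt_or_ge (B (n-1)) x with hgt | hle2
      · exact rtail x hgt h01.2 hmem
      have hkP : A (Nat.findGreatest (fun j => A j ≤ x) (n-1)) ≤ x :=
        Nat.findGreatest_spec (P := fun j => A j ≤ x) (m := 0) (Nat.zero_le _) hge
      have hkn : Nat.findGreatest (fun j => A j ≤ x) (n-1) ≤ n - 1 :=
        Nat.findGreatest_le _
      have hkn' : Nat.findGreatest (fun j => A j ≤ x) (n-1) < n := by omega
      have hxBk : B (Nat.findGreatest (fun j => A j ≤ x) (n-1)) < x := by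
        by_contra hle; push_neg at hle
        exact hxK ((hKiff x).mpr ⟨_, hkn', hkP, hle⟩)
      have hkne : Nat.findGreatest (fun j => A j ≤ x) (n-1) ≠ n - 1 := by
        intro he; rw [he] at hxBk; linarith
      have hk1 : Nat.findGreatest (fun j => A j ≤ x) (n-1) + 1 < n := by omega
      have hxA1 : x < A (Nat.findGreatest (fun j => A j ≤ x) (n-1) + 1) := by
        by_contra hle; push_neg at hle
        have := Nat.le_findGreatest (P := fun j => A j ≤ x)
          (m := Nat.findGreatest (fun j => A j ≤ x) (n-1) + 1) (n := n-1) (by omega) hle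
        omega
      exact (main (n-1) (by omega)).2 _ (by omega) x ⟨hxBk, hxA1⟩ hmem
    · intro hx
      refine ⟨hK01 hx, ?_⟩
      rw [hEqK hx]
      exact hfimg ▸ ⟨x, hx, rfl⟩
  have hsolh : SolvesIntervalCut h K := ⟨u, w, hhimg, hhset⟩
  have hfs : fstar = fun x => σ0 * h x + (-(σ0 * τ0)) := by
    funext x
    rw [hdef]
    rcases hσ0 with h' | h' <;> rw [h'] <;> ring
  rw [hfs]
  exact IFC.solves_affine hσ0 hsolh
end
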